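/- arXiv:math/0212174 — 5 statements merged into one kernel-verified Lean document; each statement's English description precedes it below -/
import Mathlib

section
/- Let λ > 0 > x be real numbers and let m, s be real numbers with m ≤ s. Define h = λ if s ≥ λ and h = m otherwise. Then 1_{s ≥ λ} ≥ 1_{m ≥ λ} + (λ - x)^{-1} [ h - min(λ, m)·1_{m ≥ 0} + min(|m|, |x|)·1_{m < 0} ], where 1_A denotes the indicator (1 if condition A holds, 0 otherwise). (This is the pathwise inequality underlying Lemma 2 of the paper, with s the supremum, m the terminal value, and h the value at the first hitting time of level λ of a continuous path started at 0.) -/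
/-- the pathwise inequality underlying Lemma 2 of the paper.  For reals
`λ > 0 > x` and `m ≤ s`, with `h = λ` if `s ≥ λ` and `h = m` otherwise,
`1_{s ≥ λ} ≥ 1_{m ≥ λ} + (λ - x)⁻¹ [h - min(λ,m) 1_{m ≥ 0} + min(|m|,|x|) 1_{m < 0}]`. -/
theorem pathwise_indicator_inequality (l x m s : ℝ) (hl : 0 < l) (hx : x < 0) (hms : m ≤ s) :
    (if l ≤ s then (1 : ℝ) else 0) ≥
      (if l ≤ m then (1 : ℝ) else 0) +
        (l - x)⁻¹ * ((if l ≤ s then l else m)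
          - min l m * (if 0 ≤ m then (1 : ℝ) else 0)
          + min |m| |x| * (if m < 0 then (1 : ℝ) else 0)) := by
  have hlx : (0:ℝ) < l - x := by linarith
  have ht0 : (0:ℝ) ≤ (l - x)⁻¹ := le_of_lt (inv_pos.2 hlx)
  have ht1 : (l - x)⁻¹ * (l - x) = 1 := inv_mul_cancel₀ (ne_of_gt hlx)
  have hxa : |x| = -x := abs_of_neg hx
  rcases le_or_gt l m with hm | hm
  · have hs : l ≤ s := le_trans hm hms
    have h0m : (0:ℝ) ≤ m := le_trans (le_of_lt hl) hm
    rw [if_pos hs, if_pos hm, if_pos h0m, if_neg (not_lt.2 h0m),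
      min_eq_left hm, if_pos hs]
    simp
  · have hminlm : min l m = m := min_eq_right (le_of_lt hm)
    rcases le_or_gt 0 m with h0m | h0m
    · rw [if_neg (not_le.2 hm), if_pos h0m, if_neg (not_lt.2 h0m), hminlm]
      rcases le_or_gt l s with hs | hs
      · rw [if_pos hs, if_pos hs]
        have hc : (l - x)⁻¹ * (l - m) ≤ 1 := by
          calc (l - x)⁻¹ * (l - m) ≤ (l - x)⁻¹ * (l - x) := by
                apply mul_le_mul_of_nonneg_left _ ht0; linarith
            _ = 1 := ht1
        linarith
      · rw [if_neg (not_le.2 hs), if_neg (not_le.2 hs)]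
        simp
    · have hma : |m| = -m := abs_of_neg h0m
      rw [if_neg (not_le.2 hm), if_neg (not_le.2 h0m), if_pos h0m, hminlm,
        hma, hxa]
      have hmin1 : min (-m) (-x) ≤ -m := min_le_left _ _
      have hmin2 : min (-m) (-x) ≤ -x := min_le_right _ _
      rcases le_or_gt l s with hs | hs
      · rw [if_pos hs, if_pos hs]
        have hc : (l - x)⁻¹ * (l - m * 0 + min (-m) (-x) * 1) ≤ 1 := by
          calc (l - x)⁻¹ * (l - m * 0 + min (-m) (-x) * 1)
              ≤ (l - x)⁻¹ * (l - x) := by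
                apply mul_le_mul_of_nonneg_left _ ht0; linarith
            _ = 1 := ht1
        linarith
      · rw [if_neg (not_le.2 hs), if_neg (not_le.2 hs)]
        have hc : (l - x)⁻¹ * (m - m * 0 + min (-m) (-x) * 1) ≤ 0 := by
          apply mul_nonpos_of_nonneg_of_nonpos ht0; linarith
        linarith
end

section
/- Let (M_t)_{t≥0} be a martingale with continuous paths on a filtered probability space, with M_0 = 0 almost surely, which converges almost surely as t → ∞ to a limit M_∞ whose law is μ. Then for every λ > 0: P(sup_{t≥0} M_t ≥ λ) ≥ μ₊(λ) and P(-inf_{t≥0} M_t ≥ λ) ≥ μ₋(λ). -/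
open MeasureTheory Set Filter
open scoped ENNReal NNReal Classical

/-- The function `c` of the paper: `c x = ∫_{[0,∞)} min(x,u) μ(du)` for `x ≥ 0`,
`c x = ∫_{(-∞,0)} min(|x|,|u|) μ(du)` for `x < 0`. -/
noncomputable def cfun (μ : Measure ℝ) (x : ℝ) : ℝ :=
  if 0 ≤ x then ∫ u in Ici (0 : ℝ), min x u ∂μ
  else ∫ u in Iio (0 : ℝ), min |x| |u| ∂μ

/-- The slope `(c(λ) - c(-x))/(λ + x)` appearing in the definition of `θ₊, γ₊`. -/
noncomputable def slopePlus (μ : Measure ℝ) (l x : ℝ) : ℝ :=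
  (cfun μ l - cfun μ (-x)) / (l + x)

/-- The slope `(c(x) - c(-λ))/(x + λ)` appearing in the definition of `θ₋, γ₋`. -/
noncomputable def slopeMinus (μ : Measure ℝ) (l x : ℝ) : ℝ :=
  (cfun μ x - cfun μ (-l)) / (x + l)

/-- The set of `x > 0` attaining the infimum in the definition of `γ₊(λ)`. -/
def argminPlus (μ : Measure ℝ) (l : ℝ) : Set ℝ :=
  {x | 0 < x ∧ ∀ y, 0 < y → slopePlus μ l x ≤ slopePlus μ l y}

/-- The set of `x > 0` attaining the supremum in the definition of `γ₋(λ)`. -/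
def argmaxMinus (μ : Measure ℝ) (l : ℝ) : Set ℝ :=
  {x | 0 < x ∧ ∀ y, 0 < y → slopeMinus μ l y ≤ slopeMinus μ l x}

/-- `θ₊(λ) = -inf_{x>0} (c(λ)-c(-x))/(λ+x)` if the infimum is attained, `0` otherwise. -/
noncomputable def thetaPlus (μ : Measure ℝ) (l : ℝ) : ℝ :=
  if (argminPlus μ l).Nonempty then -sInf (slopePlus μ l '' Ioi 0) else 0

/-- `θ₋(λ) = sup_{x>0} (c(x)-c(-λ))/(x+λ)` if the supremum is attained, `0` otherwise. -/
noncomputable def thetaMinus (μ : Measure ℝ) (l : ℝ) : ℝ :=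
  if (argmaxMinus μ l).Nonempty then sSup (slopeMinus μ l '' Ioi 0) else 0

/-- `γ₊(λ)`: the smallest minimiser if the infimum is attained, `∞ = ⊤` otherwise. -/
noncomputable def gammaPlus (μ : Measure ℝ) (l : ℝ) : EReal :=
  if (argminPlus μ l).Nonempty then ((sInf (argminPlus μ l) : ℝ) : EReal) else ⊤

/-- `γ₋(λ)`: the smallest maximiser if the supremum is attained, `∞ = ⊤` otherwise. -/
noncomputable def gammaMinus (μ : Measure ℝ) (l : ℝ) : EReal :=
  if (argmaxMinus μ l).Nonempty then ((sInf (argmaxMinus μ l) : ℝ) : EReal) else ⊤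

/-- `μ₊(λ) = θ₊(λ) + μ([λ,∞))`. -/
noncomputable def muPlus (μ : Measure ℝ) (l : ℝ) : ℝ :=
  thetaPlus μ l + (μ (Ici l)).toReal

/-- `μ₋(λ) = μ((-∞,-λ]) + θ₋(λ)`. -/
noncomputable def muMinus (μ : Measure ℝ) (l : ℝ) : ℝ :=
  (μ (Iic (-l))).toReal + thetaMinus μ l

/-!
Fix `x > 0` and let `Z` be the value of `M` when it first leaves `(-x, λ)`, or `M∞` if it never
does. Optional stopping (at the exit times capped at `T`, then `T → ∞` by dominated convergence)
gives `E Z = 0`; moreover `Z ≤ λ`, `Z ∈ {-x, λ, M∞}`, and both `Z = λ` and `M∞ ≥ λ` force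
`sup M ≥ λ`. Hence pointwise
`Z + x + (λ + x) 1{M∞ ≥ λ} ≤ (λ + x) 1{sup M ≥ λ} + (min(M∞, λ) + x)⁺`,
and since `E (min(M∞, λ) + x)⁺ = c(λ) + x - c(-x)`, integrating yields
`P(sup M ≥ λ) ≥ μ[λ, ∞) - (c(λ) - c(-x)) / (λ + x)`, which is `μ₊(λ)` at a minimising `x`.
The bound for `-inf M` is this one for the martingale `-M`, whose terminal law is the
reflection of `μ`; reflection exchanges `c(y)` and `c(-y)`, hence `μ₊` and `μ₋`.
-/

open scoped Topology

lemma coe_le_iSup_of_tendsto {ι : Type*} {L : Filter ι} [L.NeBot] {f : ι → ℝ} {a : ℝ}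
    (h : Tendsto f L (𝓝 a)) : (a : EReal) ≤ ⨆ i, (f i : EReal) :=
  le_of_tendsto' ((continuous_coe_real_ereal.tendsto a).comp h) (le_iSup fun i => (f i : EReal))

lemma EReal.iSup_neg {ι : Sort*} (f : ι → EReal) : ⨆ i, -f i = -⨅ i, f i :=
  (congrArg OrderDual.ofDual (EReal.negOrderIso.map_iInf f)).symm

section CFunction

variable {x l : ℝ}

lemma cfun_of_nonneg (μ : Measure ℝ) (hx : 0 ≤ x) : cfun μ x = ∫ u, min x (max u 0) ∂μ := by
  rw [cfun, if_pos hx, ← integral_indicator measurableSet_Ici]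
  congr with u
  rcases le_or_gt 0 u with hu | hu
  · rw [indicator_of_mem (mem_Ici.2 hu), max_eq_left hu]
  · rw [indicator_of_notMem (by simpa using hu), max_eq_right hu.le, min_eq_right hx]

lemma cfun_neg_of_pos (μ : Measure ℝ) (hx : 0 < x) :
    cfun μ (-x) = ∫ u, min x (max (-u) 0) ∂μ := by
  rw [cfun, if_neg (by linarith), abs_neg, abs_of_pos hx, ← integral_indicator measurableSet_Iio]
  congr with u
  rcases le_or_gt 0 u with hu | hu
  · rw [indicator_of_notMem (by simpa using hu), max_eq_right (by linarith), min_eq_right hx.le]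
  · rw [indicator_of_mem (mem_Iio.2 hu), abs_of_neg hu, max_eq_left (by linarith)]

lemma cfun_map_neg (μ : Measure ℝ) (hx : 0 < x) : cfun (μ.map Neg.neg) x = cfun μ (-x) := by
  rw [cfun_of_nonneg _ hx.le, cfun_neg_of_pos _ hx,
    integral_map measurable_neg.aemeasurable (by fun_prop)]

lemma cfun_map_neg_neg (μ : Measure ℝ) (hx : 0 < x) :
    cfun (μ.map Neg.neg) (-x) = cfun μ x := by
  rw [cfun_of_nonneg _ hx.le, cfun_neg_of_pos _ hx,
    integral_map measurable_neg.aemeasurable (by fun_prop)]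
  simp only [neg_neg]

lemma integrable_min_max_zero {μ : Measure ℝ} [IsFiniteMeasure μ] (hx : 0 ≤ x) {f : ℝ → ℝ}
    (hf : Measurable f) : Integrable (fun u => min x (max (f u) 0)) μ := by
  refine (integrable_const x).mono' (by fun_prop) (ae_of_all _ fun u => ?_)
  rw [Real.norm_of_nonneg (le_min hx (le_max_right _ _))]
  exact min_le_left _ _

theorem integral_max_min_add_eq_cfun {μ : Measure ℝ} [IsFiniteMeasure μ] (hx : 0 < x)
    (hl : 0 < l) :
    ∫ y, max (min y l + x) 0 ∂μ = cfun μ l + x * μ.real univ - cfun μ (-x) := by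
  have hsplit (y : ℝ) : max (min y l + x) 0 = min l (max y 0) + x - min x (max (-y) 0) := by
    simp only [min_def, max_def]
    split_ifs <;> linarith
  have hpos := integrable_min_max_zero (μ := μ) hl.le (f := fun u => u) measurable_id
  have hneg := integrable_min_max_zero (μ := μ) hx.le measurable_neg
  simp_rw [hsplit]
  rw [integral_sub (by exact hpos.add (integrable_const x)) hneg,
    integral_add hpos (integrable_const x), integral_const, cfun_of_nonneg μ hl.le,
    cfun_neg_of_pos μ hx, smul_eq_mul, mul_comm]

lemma slopePlus_map_neg (μ : Measure ℝ) (hl : 0 < l) (hx : 0 < x) :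
    slopePlus (μ.map Neg.neg) l x = -slopeMinus μ l x := by
  rw [slopePlus, slopeMinus, cfun_map_neg μ hl, cfun_map_neg_neg μ hx, add_comm l, ← neg_div,
    neg_sub]

lemma thetaPlus_map_neg (μ : Measure ℝ) (hl : 0 < l) :
    thetaPlus (μ.map Neg.neg) l = thetaMinus μ l := by
  have hslope : ∀ x ∈ Ioi (0 : ℝ), slopePlus (μ.map Neg.neg) l x = -slopeMinus μ l x :=
    fun x hx => slopePlus_map_neg μ hl hx
  have harg : argminPlus (μ.map Neg.neg) l = argmaxMinus μ l := by
    ext x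
    simp only [argminPlus, argmaxMinus, mem_ofPred_eq]
    refine and_congr_right fun hx => forall₂_congr fun y hy => ?_
    rw [hslope x hx, hslope y hy, neg_le_neg_iff]
  have himage : slopePlus (μ.map Neg.neg) l '' Ioi 0 = -(slopeMinus μ l '' Ioi 0) := by
    rw [image_congr hslope, ← image_neg_eq_neg, image_image]
  rw [thetaPlus, thetaMinus, harg, himage, Real.sInf_neg, neg_neg]

lemma muPlus_map_neg (μ : Measure ℝ) (hl : 0 < l) : muPlus (μ.map Neg.neg) l = muMinus μ l := by
  have hpre : Neg.neg ⁻¹' Ici l = Iic (-l) := by ext; simp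
  rw [muPlus, muMinus, thetaPlus_map_neg μ hl, Measure.map_apply measurable_neg measurableSet_Ici,
    hpre, add_comm]

end CFunction

lemma muPlus_le_of_forall_slopePlus {μ : Measure ℝ} {l p : ℝ} (h_tail : (μ (Ici l)).toReal ≤ p)
    (h_slope : ∀ x, 0 < x → (μ (Ici l)).toReal - slopePlus μ l x ≤ p) : muPlus μ l ≤ p := by
  rw [muPlus, thetaPlus]
  split_ifs with h
  · obtain ⟨x, hx, hmin⟩ := h
    have hleast : IsLeast (slopePlus μ l '' Ioi 0) (slopePlus μ l x) :=
      ⟨mem_image_of_mem _ hx, forall_mem_image.2 hmin⟩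
    linarith [hleast.csInf_eq, h_slope x hx]
  · linarith

lemma add_add_indicator_le_of_exit {x l z m a : ℝ} (hx : 0 < x) (hl : 0 < l) (hzl : z ≤ l)
    (hz : z = -x ∨ z = l ∨ z = m) (ha : 0 ≤ a) (hla : z = l ∨ l ≤ m → a = l + x) :
    z + x + (Ici l).indicator (fun _ => l + x) m ≤ a + max (min m l + x) 0 := by
  have hcall := le_max_right (min m l + x) 0
  rcases le_or_gt l m with hlm | hml
  · rw [indicator_of_mem (mem_Ici.2 hlm), hla (.inr hlm), min_eq_right hlm,
      max_eq_left (by linarith)]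
    linarith
  · rw [indicator_of_notMem (notMem_Ici.2 hml)]
    rcases hz with rfl | rfl | rfl
    · linarith
    · linarith [hla (.inl rfl)]
    · linarith [le_max_left (min z l + x) 0, min_eq_left hml.le]

theorem measure_map_Ici_sub_slopePlus_le {Ω : Type*} {mΩ : MeasurableSpace Ω} {P : Measure Ω}
    [IsProbabilityMeasure P] {Z X : Ω → ℝ} {A : Set Ω} {x l : ℝ} (hx : 0 < x) (hl : 0 < l)
    (hZ : Integrable Z P) (hZ0 : ∫ ω, Z ω ∂P = 0) (hX : AEMeasurable X P)
    (hZX : ∀ᵐ ω ∂P, Z ω ≤ l ∧ (Z ω = -x ∨ Z ω = l ∨ Z ω = X ω) ∧ (Z ω = l ∨ l ≤ X ω → ω ∈ A)) :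
    ((P.map X) (Ici l)).toReal - slopePlus (P.map X) l x ≤ (P A).toReal := by
  set ν := P.map X
  have : IsProbabilityMeasure ν := Measure.isProbabilityMeasure_map hX
  have hlx : 0 < l + x := by linarith
  set A' := toMeasurable P A
  have hA' : MeasurableSet A' := measurableSet_toMeasurable P A
  set tail : ℝ → ℝ := (Ici l).indicator fun _ => l + x
  set call : ℝ → ℝ := fun y => max (min y l + x) 0
  have htail : Measurable tail := measurable_const.indicator measurableSet_Ici
  have hcall : Measurable call := by fun_prop
  have hint_tail : Integrable (fun ω => tail (X ω)) P :=
    (integrable_map_measure htail.aestronglyMeasurable hX).1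
      ((integrable_const (l + x)).indicator measurableSet_Ici)
  have hint_call : Integrable (fun ω => call (X ω)) P := by
    refine (integrable_map_measure hcall.aestronglyMeasurable hX).1 <|
      (integrable_const (l + x)).mono' hcall.aestronglyMeasurable (ae_of_all _ fun y => ?_)
    rw [Real.norm_of_nonneg (le_max_right _ _)]
    exact max_le (by linarith [min_le_right y l]) hlx.le
  have hint_A : Integrable (A'.indicator fun _ => l + x) P := (integrable_const _).indicator hA'
  have hZx : Integrable (fun ω => Z ω + x) P := hZ.add (integrable_const x)
  have hmono : ∫ ω, Z ω + x + tail (X ω) ∂P ≤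
      ∫ ω, A'.indicator (fun _ => l + x) ω + call (X ω) ∂P := by
    refine integral_mono_ae (hZx.add hint_tail) (hint_A.add hint_call) ?_
    filter_upwards [hZX] with ω ⟨hZl, hcases, hA⟩
    exact add_add_indicator_le_of_exit hx hl hZl hcases (indicator_nonneg (fun _ _ => hlx.le) ω)
      fun h => indicator_of_mem (subset_toMeasurable P A (hA h)) _
  rw [integral_add hZx hint_tail, integral_add hZ (integrable_const x),
    integral_add hint_A hint_call, hZ0, integral_const,
    ← integral_map hX htail.aestronglyMeasurable, ← integral_map hX hcall.aestronglyMeasurable,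
    integral_max_min_add_eq_cfun hx hl, integral_indicator measurableSet_Ici,
    integral_indicator hA', setIntegral_const, setIntegral_const] at hmono
  simp only [smul_eq_mul, Measure.real_def, measure_toMeasurable, A', measure_univ,
    ENNReal.toReal_one] at hmono
  rw [slopePlus, sub_le_iff_le_add, ← sub_le_iff_le_add', le_div_iff₀ hlx]
  nlinarith

noncomputable def dyadicCeil (n : ℕ) (t : ℝ≥0) : ℝ≥0 := ⌈t * 2 ^ n⌉₊ / 2 ^ n

section DyadicCeil

lemma le_dyadicCeil (n : ℕ) (t : ℝ≥0) : t ≤ dyadicCeil n t := by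
  rw [dyadicCeil, le_div_iff₀ (by positivity)]
  exact Nat.le_ceil _

lemma dyadicCeil_le_add (n : ℕ) (t : ℝ≥0) : dyadicCeil n t ≤ t + (2 ^ n)⁻¹ := by
  rw [dyadicCeil, div_le_iff₀ (by positivity), add_mul, inv_mul_cancel₀ (by positivity)]
  exact (Nat.ceil_lt_add_one (by positivity)).le

lemma dyadicCeil_le_add_one (n : ℕ) (t : ℝ≥0) : dyadicCeil n t ≤ t + 1 :=
  (dyadicCeil_le_add n t).trans
    (add_le_add_right (inv_le_one_of_one_le₀ (one_le_pow₀ one_le_two)) t)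

lemma tendsto_dyadicCeil (t : ℝ≥0) : Tendsto (fun n => dyadicCeil n t) atTop (𝓝 t) := by
  have hlim : Tendsto (fun n : ℕ => t + ((2 : ℝ≥0) ^ n)⁻¹) atTop (𝓝 (t + 0)) :=
    tendsto_const_nhds.add <| tendsto_inv_atTop_zero.comp <|
      tendsto_pow_atTop_atTop_of_one_lt one_lt_two
  rw [add_zero] at hlim
  exact tendsto_of_tendsto_of_tendsto_of_le_of_le tendsto_const_nhds hlim
    (fun n => le_dyadicCeil n t) (fun n => dyadicCeil_le_add n t)

lemma dyadicCeil_le_iff (n : ℕ) (t u : ℝ≥0) :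
    dyadicCeil n t ≤ u ↔ t ≤ ⌊u * 2 ^ n⌋₊ / 2 ^ n := by
  rw [dyadicCeil, div_le_iff₀ (by positivity), le_div_iff₀ (by positivity),
    ← Nat.le_floor_iff (by positivity), Nat.ceil_le]

variable {Ω : Type*} {mΩ : MeasurableSpace Ω} {F : Filtration ℝ≥0 mΩ} {τ : Ω → ℝ≥0}

lemma MeasureTheory.IsStoppingTime.dyadicCeil
    (hτ : IsStoppingTime F fun ω => (τ ω : WithTop ℝ≥0)) (n : ℕ) :
    IsStoppingTime F fun ω => (dyadicCeil n (τ ω) : WithTop ℝ≥0) := by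
  intro u
  have hfloor : (⌊u * 2 ^ n⌋₊ / 2 ^ n : ℝ≥0) ≤ u := by
    rw [div_le_iff₀ (by positivity)]
    exact Nat.floor_le (by positivity)
  simp only [WithTop.coe_le_coe, dyadicCeil_le_iff]
  simpa only [WithTop.coe_le_coe] using F.mono hfloor _ (hτ (⌊u * 2 ^ n⌋₊ / 2 ^ n))

lemma countable_range_dyadicCeil (n : ℕ) :
    (range fun ω => (dyadicCeil n (τ ω) : WithTop ℝ≥0)).Countable :=
  (countable_range fun k : ℕ => ((k / 2 ^ n : ℝ≥0) : WithTop ℝ≥0)).mono <| by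
    rintro - ⟨ω, rfl⟩
    exact ⟨_, rfl⟩

end DyadicCeil

theorem MeasureTheory.Martingale.integral_stoppedValue_of_continuous {Ω : Type*}
    {mΩ : MeasurableSpace Ω} {P : Measure Ω} [IsFiniteMeasure P] {F : Filtration ℝ≥0 mΩ}
    {M : ℝ≥0 → Ω → ℝ} {τ : Ω → ℝ≥0} (hM : Martingale M F P)
    (hcont : ∀ ω, Continuous fun t => M t ω)
    (hτ : IsStoppingTime F fun ω => (τ ω : WithTop ℝ≥0)) {T : ℝ≥0} (hτT : ∀ ω, τ ω ≤ T) :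
    ∫ ω, M (τ ω) ω ∂P = ∫ ω, M 0 ω ∂P := by
  -- discrete optional sampling needs countably many values, so approximate `τ` from above
  set σ : ℕ → Ω → WithTop ℝ≥0 := fun n ω => dyadicCeil n (τ ω)
  have hσ (n : ℕ) : IsStoppingTime F (σ n) := hτ.dyadicCeil n
  have hσT (n : ℕ) (ω : Ω) : σ n ω ≤ T + 1 :=
    WithTop.coe_le_coe.2 ((dyadicCeil_le_add_one n _).trans (add_le_add_left (hτT ω) 1))
  have hsample (n : ℕ) : stoppedValue M (σ n) =ᵐ[P] P[M (T + 1) | (hσ n).measurableSpace] :=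
    hM.stoppedValue_ae_eq_condExp_of_le_const_of_countable_range (hσ n) (hσT n)
      (countable_range_dyadicCeil n)
  have hUI : UniformIntegrable (fun n => stoppedValue M (σ n)) 1 P :=
    ((hM.integrable (T + 1)).uniformIntegrable_condExp fun n => (hσ n).measurableSpace_le).ae_eq
      fun n => (hsample n).symm
  have hlim : ∀ ω, Tendsto (fun n => stoppedValue M (σ n) ω) atTop (𝓝 (M (τ ω) ω)) :=
    fun ω => ((hcont ω).tendsto _).comp (tendsto_dyadicCeil (τ ω))
  have hint : Integrable (fun ω => M (τ ω) ω) P :=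
    hUI.integrable_of_ae_tendsto (ae_of_all _ hlim)
  have hL1 := tendsto_Lp_finite_of_tendsto_ae le_rfl ENNReal.one_ne_top
    (fun n => hUI.aestronglyMeasurable n) (memLp_one_iff_integrable.2 hint) hUI.unifIntegrable
    (ae_of_all _ hlim)
  simp_rw [eLpNorm_one_eq_lintegral_enorm] at hL1
  have hconv := tendsto_integral_of_L1 _ hint.aestronglyMeasurable
    (Eventually.of_forall fun n => (hUI.memLp n).integrable le_rfl) hL1
  have hconst (n : ℕ) : ∫ ω, stoppedValue M (σ n) ω ∂P = ∫ ω, M 0 ω ∂P := by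
    rw [integral_congr_ae (hsample n), integral_condExp (hσ n).measurableSpace_le,
      ← integral_condExp (F.le 0), integral_congr_ae (hM.condExp_ae_eq zero_le)]
  simp_rw [hconst] at hconv
  exact tendsto_nhds_unique hconv tendsto_const_nhds

section HittingTime

variable {Ω β : Type*} {M : ℝ≥0 → Ω → β} {s : Set β} {ω : Ω}

lemma hittingBtwn_eq_of_forall_notMem (h : ∀ t, M t ω ∉ s) (T : ℝ≥0) :
    hittingBtwn M s 0 T ω = T := by
  simp [hittingBtwn, h]

variable [TopologicalSpace β]

lemma hittingBtwn_mem_of_continuous (hω : Continuous fun t => M t ω) (hs : IsClosed s)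
    {n m : ℝ≥0} (h : ∃ j ∈ Icc n m, M j ω ∈ s) : M (hittingBtwn M s n m ω) ω ∈ s := by
  rw [hittingBtwn, if_pos h]
  obtain ⟨j, hj, hjs⟩ := h
  exact ((isClosed_Icc.inter (hs.preimage hω)).csInf_mem ⟨j, hj, hjs⟩
    bddBelow_Icc.inter_of_left).2

lemma hittingBtwn_mem_closure_compl (hω : Continuous fun t => M t ω) (h0 : M 0 ω ∈ closure sᶜ)
    (T : ℝ≥0) : M (hittingBtwn M s 0 T ω) ω ∈ closure sᶜ := by
  rcases eq_zero_or_pos (hittingBtwn M s 0 T ω) with h | hpos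
  · rwa [h]
  · have : (𝓝[<] hittingBtwn M s 0 T ω).NeBot := nhdsLT_neBot_of_exists_lt ⟨0, hpos⟩
    have hbefore : ∀ u ∈ Iio (hittingBtwn M s 0 T ω), M u ω ∈ closure sᶜ :=
      fun u hu => subset_closure (notMem_of_lt_hittingBtwn hu zero_le)
    exact isClosed_closure.mem_of_tendsto ((hω.tendsto _).mono_left nhdsWithin_le_nhds)
      (eventually_nhdsWithin_of_forall hbefore)

lemma hittingBtwn_eq_sInf_of_le (hω : Continuous fun t => M t ω) (hs : IsClosed s)
    (h : ∃ t, M t ω ∈ s) {T : ℝ≥0} (hT : sInf {t | M t ω ∈ s} ≤ T) :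
    hittingBtwn M s 0 T ω = sInf {t | M t ω ∈ s} := by
  have hmem := (hs.preimage hω).csInf_mem h (OrderBot.bddBelow _)
  refine le_antisymm (hittingBtwn_le_of_mem zero_le hT hmem) ?_
  rw [hittingBtwn, if_pos ⟨_, ⟨zero_le, hT⟩, hmem⟩]
  exact csInf_le_csInf (OrderBot.bddBelow _) ⟨_, ⟨zero_le, hT⟩, hmem⟩ inter_subset_right

end HittingTime

section HittingTimeMeasurable

variable {Ω β : Type*} {mΩ : MeasurableSpace Ω} [PseudoMetricSpace β] {F : Filtration ℝ≥0 mΩ}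
  {M : ℝ≥0 → Ω → β} {s : Set β}

lemma exists_le_mem_iff_forall_infEDist_lt {f : ℝ≥0 → β} (hf : Continuous f) (hs : IsClosed s)
    {t : ℝ≥0} {Q : Set ℝ≥0} (hQt : Q ⊆ Iic t) (hQ : Iic t ⊆ closure Q) :
    (∃ u ≤ t, f u ∈ s) ↔ ∀ k : ℕ, ∃ q ∈ Q, Metric.infEDist (f q) s < (k : ℝ≥0∞)⁻¹ := by
  have hg : Continuous fun u => Metric.infEDist (f u) s := Metric.continuous_infEDist.comp hf
  constructor
  · rintro ⟨u, hut, hu⟩ k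
    have hopen : IsOpen {v | Metric.infEDist (f v) s < (k : ℝ≥0∞)⁻¹} :=
      isOpen_lt hg continuous_const
    have hu' : Metric.infEDist (f u) s < (k : ℝ≥0∞)⁻¹ := by
      rw [Metric.infEDist_zero_of_mem hu, ENNReal.inv_pos]
      exact ENNReal.natCast_ne_top k
    obtain ⟨q, hq, hqQ⟩ := mem_closure_iff.1 (hQ hut) _ hopen hu'
    exact ⟨q, hqQ, hq⟩
  · intro h
    by_contra! hnot
    -- on the compact interval `[0, t]` the distance to `s` has a positive minimum
    obtain ⟨u, hut, hmin⟩ :=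
      (Icc_bot (a := t) ▸ isCompact_Icc).exists_isMinOn nonempty_Iic hg.continuousOn
    have hpos : Metric.infEDist (f u) s ≠ 0 := by
      rw [ne_eq, ← Metric.mem_closure_iff_infEDist_zero, hs.closure_eq]
      exact hnot u hut
    obtain ⟨k, hk⟩ := ENNReal.exists_inv_nat_lt hpos
    obtain ⟨q, hqQ, hq⟩ := h k
    exact (hk.trans_le (hmin (hQt hqQ))).not_gt hq

variable [MeasurableSpace β] [BorelSpace β]

lemma measurableSet_exists_le_mem (hM : StronglyAdapted F M)
    (hcont : ∀ ω, Continuous fun t => M t ω) (hs : IsClosed s) (t : ℝ≥0) :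
    MeasurableSet[F t] {ω | ∃ u ≤ t, M u ω ∈ s} := by
  obtain ⟨D, hDc, hD⟩ := TopologicalSpace.exists_countable_dense ℝ≥0
  set Q := insert t (D ∩ Iio t)
  have hQt : Q ⊆ Iic t := insert_subset (mem_Iic.2 le_rfl) fun q hq => mem_Iic.2 hq.2.le
  have hQ : Iic t ⊆ closure Q := by
    intro u hu
    rcases (mem_Iic.1 hu).eq_or_lt with rfl | hut
    · exact subset_closure (mem_insert _ _)
    · refine closure_mono (subset_insert _ _) ?_
      rw [inter_comm]
      exact hD.open_subset_closure_inter isOpen_Iio hut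
  have hset : {ω | ∃ u ≤ t, M u ω ∈ s} =
      ⋂ k : ℕ, ⋃ q ∈ Q, {ω | Metric.infEDist (M q ω) s < (k : ℝ≥0∞)⁻¹} := by
    ext ω
    simpa only [mem_iInter, mem_iUnion, exists_prop, mem_ofPred_eq] using
      exists_le_mem_iff_forall_infEDist_lt (hcont ω) hs hQt hQ
  rw [hset]
  refine .iInter fun k => .biUnion ((hDc.mono inter_subset_left).insert t) fun q hq => ?_
  have hMq : Measurable[F t] (M q) := ((hM q).mono (F.mono (hQt hq))).measurable
  exact measurableSet_lt (Metric.continuous_infEDist.measurable.comp hMq) measurable_const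

lemma isStoppingTime_hittingBtwn_of_continuous (hM : StronglyAdapted F M)
    (hcont : ∀ ω, Continuous fun t => M t ω) (hs : IsClosed s) (T : ℝ≥0) :
    IsStoppingTime F fun ω => ((hittingBtwn M s 0 T ω : ℝ≥0) : WithTop ℝ≥0) := by
  intro t
  simp only [WithTop.coe_le_coe]
  rcases le_or_gt T t with hTt | htT
  · simp [(hittingBtwn_le _).trans hTt]
  · convert measurableSet_exists_le_mem hM hcont hs t using 1
    ext ω
    simp only [mem_ofPred_eq]
    refine ⟨fun h => ?_, fun ⟨u, hut, hu⟩ =>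
      (hittingBtwn_le_of_mem zero_le (hut.trans htT.le) hu).trans hut⟩
    have hhit : ∃ j ∈ Icc 0 T, M j ω ∈ s := by
      by_contra hnot
      simp only [hittingBtwn_def, if_neg hnot] at h
      exact h.not_gt htT
    exact ⟨_, h, hittingBtwn_mem_of_continuous (hcont ω) hs hhit⟩

end HittingTimeMeasurable

noncomputable def exitValue {Ω β : Type*} (M : ℝ≥0 → Ω → β) (X : Ω → β) (s : Set β) (ω : Ω) :
    β :=
  if ∃ t, M t ω ∈ s then M (sInf {t | M t ω ∈ s}) ω else X ω

section ExitValue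

variable {Ω β : Type*} [TopologicalSpace β] {M : ℝ≥0 → Ω → β} {X : Ω → β} {s : Set β} {ω : Ω}

lemma tendsto_hittingBtwn_exitValue (hω : Continuous fun t => M t ω) (hs : IsClosed s)
    (hX : Tendsto (fun t => M t ω) atTop (𝓝 (X ω))) :
    Tendsto (fun T => M (hittingBtwn M s 0 T ω) ω) atTop (𝓝 (exitValue M X s ω)) := by
  by_cases h : ∃ t, M t ω ∈ s
  · refine tendsto_const_nhds.congr' ?_
    filter_upwards [eventually_ge_atTop (sInf {t | M t ω ∈ s})] with T hT
    rw [exitValue, if_pos h, hittingBtwn_eq_sInf_of_le hω hs h hT]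
  · simp only [not_exists] at h
    simpa [exitValue, h, hittingBtwn_eq_of_forall_notMem h] using hX

lemma exitValue_mem_or_eq (hω : Continuous fun t => M t ω) (hs : IsClosed s) :
    exitValue M X s ω ∈ s ∨ exitValue M X s ω = X ω := by
  unfold exitValue
  split_ifs with h
  · exact .inl ((hs.preimage hω).csInf_mem h (OrderBot.bddBelow _))
  · exact .inr rfl

end ExitValue

section ExitInterval

variable {Ω : Type*} {M : ℝ≥0 → Ω → ℝ} {X : Ω → ℝ} {x l : ℝ} {ω : Ω}

lemma hittingBtwn_mem_Icc (hω : Continuous fun t => M t ω) (h0 : M 0 ω = 0) (hx : 0 < x)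
    (hl : 0 < l) (T : ℝ≥0) : M (hittingBtwn M (Ioo (-x) l)ᶜ 0 T ω) ω ∈ Icc (-x) l := by
  have hIcc : closure (Ioo (-x) l)ᶜᶜ = Icc (-x) l := by
    rw [compl_compl, closure_Ioo (by linarith)]
  rw [← hIcc]
  refine hittingBtwn_mem_closure_compl hω ?_ T
  rw [hIcc, h0]
  exact ⟨by linarith, hl.le⟩

lemma exitValue_mem_Icc (hω : Continuous fun t => M t ω) (h0 : M 0 ω = 0)
    (hX : Tendsto (fun t => M t ω) atTop (𝓝 (X ω))) (hx : 0 < x) (hl : 0 < l) :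
    exitValue M X (Ioo (-x) l)ᶜ ω ∈ Icc (-x) l :=
  isClosed_Icc.mem_of_tendsto (tendsto_hittingBtwn_exitValue hω isOpen_Ioo.isClosed_compl hX)
    (Eventually.of_forall (hittingBtwn_mem_Icc hω h0 hx hl))

lemma exitValue_eq_or (hω : Continuous fun t => M t ω) (h0 : M 0 ω = 0)
    (hX : Tendsto (fun t => M t ω) atTop (𝓝 (X ω))) (hx : 0 < x) (hl : 0 < l) :
    exitValue M X (Ioo (-x) l)ᶜ ω = -x ∨ exitValue M X (Ioo (-x) l)ᶜ ω = l ∨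
      exitValue M X (Ioo (-x) l)ᶜ ω = X ω := by
  obtain ⟨hlo, hhi⟩ := exitValue_mem_Icc hω h0 hX hx hl
  rcases exitValue_mem_or_eq (X := X) hω isOpen_Ioo.isClosed_compl with h | h
  · rw [mem_compl_iff, mem_Ioo, not_and_or, not_lt, not_lt] at h
    rcases h with h | h
    · exact .inl (le_antisymm h hlo)
    · exact .inr (.inl (le_antisymm hhi h))
  · exact .inr (.inr h)

lemma exitValue_le_iSup {s : Set ℝ} (hX : Tendsto (fun t => M t ω) atTop (𝓝 (X ω))) :
    ((exitValue M X s ω : ℝ) : EReal) ≤ ⨆ t, (M t ω : EReal) := by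
  unfold exitValue
  split_ifs
  · exact le_iSup (fun t => (M t ω : EReal)) _
  · exact coe_le_iSup_of_tendsto hX

variable {mΩ : MeasurableSpace Ω} {P : Measure Ω} [IsFiniteMeasure P] {F : Filtration ℝ≥0 mΩ}

theorem integrable_and_integral_exitValue_eq_zero (hM : Martingale M F P)
    (hcont : ∀ ω, Continuous fun t => M t ω) (hM0 : ∀ᵐ ω ∂P, M 0 ω = 0)
    (hX : ∀ᵐ ω ∂P, Tendsto (fun t => M t ω) atTop (𝓝 (X ω))) (hx : 0 < x) (hl : 0 < l) :
    Integrable (exitValue M X (Ioo (-x) l)ᶜ) P ∧ ∫ ω, exitValue M X (Ioo (-x) l)ᶜ ω ∂P = 0 := by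
  set s := (Ioo (-x) l)ᶜ
  have hs : IsClosed s := isOpen_Ioo.isClosed_compl
  have hbound {y : ℝ} (hy : y ∈ Icc (-x) l) : ‖y‖ ≤ max x l := by
    rw [Real.norm_eq_abs, abs_le]
    exact ⟨by linarith [le_max_left x l, hy.1], hy.2.trans (le_max_right x l)⟩
  have hρ (T : ℝ≥0) := isStoppingTime_hittingBtwn_of_continuous hM.stronglyAdapted hcont hs T
  have hmeas (T : ℝ≥0) : AEStronglyMeasurable (fun ω => M (hittingBtwn M s 0 T ω) ω) P :=
    ((stronglyMeasurable_stoppedValue_of_le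
      (hM.stronglyAdapted.isStronglyProgressive_of_continuous hcont) (hρ T)
      fun ω => WithTop.coe_le_coe.2 (hittingBtwn_le ω)).mono (F.le T)).aestronglyMeasurable
  have hlim : ∀ᵐ ω ∂P, Tendsto (fun T => M (hittingBtwn M s 0 T ω) ω) atTop
      (𝓝 (exitValue M X s ω)) := by
    filter_upwards [hX] with ω hω using tendsto_hittingBtwn_exitValue (hcont ω) hs hω
  have hint := tendsto_integral_filter_of_dominated_convergence (fun _ => max x l)
    (Eventually.of_forall hmeas) (Eventually.of_forall fun T => by
      filter_upwards [hM0] with ω h0 using hbound (hittingBtwn_mem_Icc (hcont ω) h0 hx hl T))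
    (integrable_const _) hlim
  have hzero (T : ℝ≥0) : ∫ ω, M (hittingBtwn M s 0 T ω) ω ∂P = 0 := by
    rw [hM.integral_stoppedValue_of_continuous hcont (hρ T) (fun ω => hittingBtwn_le ω),
      integral_eq_zero_of_ae hM0]
  simp_rw [hzero] at hint
  refine ⟨(integrable_const (max x l)).mono' (aestronglyMeasurable_of_tendsto_ae _ hmeas hlim) ?_,
    (tendsto_nhds_unique tendsto_const_nhds hint).symm⟩
  filter_upwards [hM0, hX] with ω h0 hω using hbound (exitValue_mem_Icc (hcont ω) h0 hω hx hl)

end ExitInterval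

theorem muPlus_map_le_measure_le_iSup {Ω : Type*} {mΩ : MeasurableSpace Ω} {P : Measure Ω}
    [IsProbabilityMeasure P] {F : Filtration ℝ≥0 mΩ} {M : ℝ≥0 → Ω → ℝ} {X : Ω → ℝ} {l : ℝ}
    (hM : Martingale M F P) (hcont : ∀ ω, Continuous fun t => M t ω)
    (hM0 : ∀ᵐ ω ∂P, M 0 ω = 0) (hX : ∀ᵐ ω ∂P, Tendsto (fun t => M t ω) atTop (𝓝 (X ω)))
    (hl : 0 < l) :
    muPlus (P.map X) l ≤ (P {ω | (l : EReal) ≤ ⨆ t, (M t ω : EReal)}).toReal := by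
  have hXm : AEMeasurable X P :=
    aemeasurable_of_tendsto_metrizable_ae atTop (fun t => (hM.integrable t).aemeasurable) hX
  have hX_le : ∀ᵐ ω ∂P, l ≤ X ω → (l : EReal) ≤ ⨆ t, (M t ω : EReal) := by
    filter_upwards [hX] with ω hω hlX using (EReal.coe_le_coe_iff.2 hlX).trans
      (coe_le_iSup_of_tendsto hω)
  refine muPlus_le_of_forall_slopePlus ?_ fun x hx => ?_
  · rw [Measure.map_apply_of_aemeasurable hXm measurableSet_Ici]
    exact ENNReal.toReal_mono (measure_ne_top P _) (measure_mono_ae hX_le)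
  · obtain ⟨hZ, hZ0⟩ := integrable_and_integral_exitValue_eq_zero hM hcont hM0 hX hx hl
    refine measure_map_Ici_sub_slopePlus_le hx hl hZ hZ0 hXm ?_
    filter_upwards [hM0, hX, hX_le] with ω h0 hω hω_le
    refine ⟨(exitValue_mem_Icc (hcont ω) h0 hω hx hl).2,
      exitValue_eq_or (hcont ω) h0 hω hx hl, ?_⟩
    rintro (hZl | hlX)
    · exact hZl ▸ exitValue_le_iSup hω
    · exact hω_le hlX

theorem martingale_sup_inf_tail_bounds_general
    {Ω : Type*} {mΩ : MeasurableSpace Ω} {P : Measure Ω} [IsProbabilityMeasure P]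
    {F : Filtration ℝ≥0 mΩ} {M : ℝ≥0 → Ω → ℝ} {Minf : Ω → ℝ}
    (μ : Measure ℝ)
    (hmart : Martingale M F P)
    (hcont : ∀ ω, Continuous fun t => M t ω)
    (hM0 : ∀ᵐ ω ∂P, M 0 ω = 0)
    (hconv : ∀ᵐ ω ∂P, Tendsto (fun t => M t ω) atTop (nhds (Minf ω)))
    (hlaw : P.map Minf = μ) :
    ∀ l : ℝ, 0 < l →
      muPlus μ l ≤ (P {ω | (l : EReal) ≤ ⨆ t : ℝ≥0, ((M t ω : ℝ) : EReal)}).toReal ∧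
      muMinus μ l ≤ (P {ω | (l : EReal) ≤ -⨅ t : ℝ≥0, ((M t ω : ℝ) : EReal)}).toReal := by
  intro l hl
  subst hlaw
  refine ⟨muPlus_map_le_measure_le_iSup hmart hcont hM0 hconv hl, ?_⟩
  have hXm : AEMeasurable Minf P :=
    aemeasurable_of_tendsto_metrizable_ae atTop (fun t => (hmart.integrable t).aemeasurable) hconv
  have hneg := muPlus_map_le_measure_le_iSup (X := Neg.neg ∘ Minf) hmart.neg
    (fun ω => (hcont ω).neg) (by filter_upwards [hM0] with ω h0 using by simp [h0])
    (by filter_upwards [hconv] with ω hω using hω.neg) hl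
  have hset : {ω | (l : EReal) ≤ -⨅ t, (M t ω : EReal)} =
      {ω | (l : EReal) ≤ ⨆ t, ((-M) t ω : EReal)} := by
    ext ω
    simp only [Pi.neg_apply, EReal.coe_neg, EReal.iSup_neg]
  rwa [← AEMeasurable.map_map_of_aemeasurable measurable_neg.aemeasurable hXm,
    muPlus_map_neg _ hl, ← hset] at hneg

/-- if `M` is a continuous martingale vanishing at `0` which converges a.s.
to a limit `M∞` with law `μ`, then for every `λ > 0`,
`P(sup_t M_t ≥ λ) ≥ μ₊(λ)` and `P(-inf_t M_t ≥ λ) ≥ μ₋(λ)` (the supremum and infimum of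
the path are computed in the extended reals `EReal` to allow unbounded paths). -/
theorem martingale_sup_inf_tail_bounds
    {Ω : Type*} {mΩ : MeasurableSpace Ω} {P : Measure Ω} [IsProbabilityMeasure P]
    {F : Filtration ℝ≥0 mΩ} {M : ℝ≥0 → Ω → ℝ} {Minf : Ω → ℝ}
    (μ : Measure ℝ) [IsProbabilityMeasure μ] (h0 : μ {0} = 0)
    (hmart : Martingale M F P)
    (hcont : ∀ ω, Continuous fun t => M t ω)
    (hM0 : ∀ᵐ ω ∂P, M 0 ω = 0)
    (hconv : ∀ᵐ ω ∂P, Tendsto (fun t => M t ω) atTop (nhds (Minf ω)))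
    (hlaw : P.map Minf = μ) :
    ∀ l : ℝ, 0 < l →
      muPlus μ l ≤ (P {ω | (l : EReal) ≤ ⨆ t : ℝ≥0, ((M t ω : ℝ) : EReal)}).toReal ∧
      muMinus μ l ≤ (P {ω | (l : EReal) ≤ -⨅ t : ℝ≥0, ((M t ω : ℝ) : EReal)}).toReal :=
  martingale_sup_inf_tail_bounds_general μ hmart hcont hM0 hconv hlaw
end

section
/- For every z > 0 the following upper bounds hold: ν₊(z) ≤ (1/s(z)) · [ c_Y(-z) - c_Y(z) - |s(-z)| ν((-∞,-z]) ]₊ · 1_{z > ρ₊(z)} + ν({y : |y| ≥ z}), and ν₋(z) ≤ (1/|s(-z)|) · [ c_Y(z) - c_Y(-z) - s(z) ν([z,∞)) ]₊ · 1_{z > ρ₋(z)} + ν({y : |y| ≥ z}), where [a]₊ = max(a,0) and 1_A is the indicator of A. -/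
open MeasureTheory Set Filter
open scoped ENNReal NNReal Classical

/-- The function `c_Y` of the paper: `c_Y y = ∫_{[0,∞)} min(s(y),s(w)) ν(dw)` for `y ≥ 0`,
`c_Y y = ∫_{(-∞,0)} min(|s(y)|,|s(w)|) ν(dw)` for `y < 0`. -/
noncomputable def cY (s : ℝ → ℝ) (ν : Measure ℝ) (y : ℝ) : ℝ :=
  if 0 ≤ y then ∫ w in Ici (0 : ℝ), min (s y) (s w) ∂ν
  else ∫ w in Iio (0 : ℝ), min |s y| |s w| ∂ν

/-- The slope `(c_Y(z) - c_Y(-y))/(s(z) - s(-y))` in the definition of `ζ₊, ρ₊`. -/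
noncomputable def slopeYPlus (s : ℝ → ℝ) (ν : Measure ℝ) (z y : ℝ) : ℝ :=
  (cY s ν z - cY s ν (-y)) / (s z - s (-y))

/-- The slope `(c_Y(y) - c_Y(-z))/(s(y) - s(-z))` in the definition of `ζ₋, ρ₋`. -/
noncomputable def slopeYMinus (s : ℝ → ℝ) (ν : Measure ℝ) (z y : ℝ) : ℝ :=
  (cY s ν y - cY s ν (-z)) / (s y - s (-z))

/-- The set of `y > 0` attaining the infimum in the definition of `ρ₊(z)`. -/
def argYPlus (s : ℝ → ℝ) (ν : Measure ℝ) (z : ℝ) : Set ℝ :=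
  {y | 0 < y ∧ ∀ x, 0 < x → slopeYPlus s ν z y ≤ slopeYPlus s ν z x}

/-- The set of `y > 0` attaining the supremum in the definition of `ρ₋(z)`. -/
def argYMinus (s : ℝ → ℝ) (ν : Measure ℝ) (z : ℝ) : Set ℝ :=
  {y | 0 < y ∧ ∀ x, 0 < x → slopeYMinus s ν z x ≤ slopeYMinus s ν z y}

/-- `ζ₊(z) = -inf_{y>0} (c_Y(z)-c_Y(-y))/(s(z)-s(-y))` if attained, `0` otherwise. -/
noncomputable def zetaPlus (s : ℝ → ℝ) (ν : Measure ℝ) (z : ℝ) : ℝ :=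
  if (argYPlus s ν z).Nonempty then -sInf (slopeYPlus s ν z '' Ioi 0) else 0

/-- `ζ₋(z) = sup_{y>0} (c_Y(y)-c_Y(-z))/(s(y)-s(-z))` if attained, `0` otherwise. -/
noncomputable def zetaMinus (s : ℝ → ℝ) (ν : Measure ℝ) (z : ℝ) : ℝ :=
  if (argYMinus s ν z).Nonempty then sSup (slopeYMinus s ν z '' Ioi 0) else 0

/-- `ν₊(z) = ζ₊(z) + ν([z,∞))`, the tail distribution function of the supremum of the
stopped process for the optimal embedding. -/
noncomputable def nuPlus (s : ℝ → ℝ) (ν : Measure ℝ) (z : ℝ) : ℝ :=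
  zetaPlus s ν z + (ν (Ici z)).toReal

/-- `ν₋(z) = ν((-∞,-z]) + ζ₋(z)`, the tail distribution function of minus the infimum of
the stopped process for the optimal embedding. -/
noncomputable def nuMinus (s : ℝ → ℝ) (ν : Measure ℝ) (z : ℝ) : ℝ :=
  (ν (Iic (-z))).toReal + zetaMinus s ν z

/-!
Fix `z > 0` and a maximiser `ρ > 0` of `y ↦ (c_Y(-y) - c_Y(z)) / (s(z) - s(-y))`, whose maximum
is `ζ₊(z)` (`ζ₋` is symmetric). Both halves of `c_Y` are integrals of `w ↦ min(c, g w)` with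
`g ≥ 0`, and raising `c` to `d` changes such an integral by at least `(d - c) ν(g ≥ d)` and at
most `(d - c) ν(g > c)`. Comparing `ρ` with `x ∈ (0, ρ)`, maximality and the upper bound give
`ζ₊(z) ≤ ν((-∞, -x))`; letting `x ↑ ρ`, `ζ₊(z) ≤ ν((-∞, -ρ])`, which settles the case that every
maximiser is `≥ z`. If some maximiser `ρ` is `< z`, the lower bound on `c_Y(-z) - c_Y(-ρ)` gives
`c_Y(-ρ) - c_Y(z) ≤ [c_Y(-z) - c_Y(z) - |s(-z)| ν((-∞, -z])]₊ + |s(-ρ)| ν((-∞, -z])`, and the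
denominator `s(z) + |s(-ρ)|` splits this into the bound.
-/

open Topology

section IntegralMin

variable {α : Type*} [MeasurableSpace α] {μ : Measure α} [IsFiniteMeasure μ] {g : α → ℝ}
  {c d : ℝ}

lemma integrable_min_of_ae_nonneg (hg : Measurable g) (hg0 : ∀ᵐ w ∂μ, 0 ≤ g w) (hc : 0 ≤ c) :
    Integrable (fun w ↦ min c (g w)) μ :=
  (integrable_const c).mono' (measurable_const.min hg).aestronglyMeasurable <| by
    filter_upwards [hg0] with w hw
    rw [Real.norm_of_nonneg (le_min hc hw)]
    exact min_le_left _ _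

lemma integral_min_sub_integral_min_le (hg : Measurable g) (hg0 : ∀ᵐ w ∂μ, 0 ≤ g w)
    (hc : 0 ≤ c) (hcd : c ≤ d) :
    ∫ w, min d (g w) ∂μ - ∫ w, min c (g w) ∂μ ≤ (d - c) * μ.real {w | c < g w} := by
  have hS : MeasurableSet {w | c < g w} := measurableSet_lt measurable_const hg
  rw [← integral_sub (integrable_min_of_ae_nonneg hg hg0 (hc.trans hcd))
      (integrable_min_of_ae_nonneg hg hg0 hc), mul_comm, ← smul_eq_mul,
    ← integral_indicator_const _ hS]
  refine integral_mono_of_nonneg (ae_of_all _ fun w ↦ sub_nonneg.2 (min_le_min_right _ hcd))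
    ((integrable_const _).indicator hS) (ae_of_all _ fun w ↦ ?_)
  simp only [indicator, mem_ofPred_eq]
  split_ifs with h
  · linarith [min_eq_left h.le, min_le_left d (g w)]
  · linarith [min_eq_right (not_lt.1 h), min_le_right d (g w)]

lemma mul_measureReal_le_integral_min_sub_integral_min (hg : Measurable g)
    (hg0 : ∀ᵐ w ∂μ, 0 ≤ g w) (hc : 0 ≤ c) (hcd : c ≤ d) :
    (d - c) * μ.real {w | d ≤ g w} ≤ ∫ w, min d (g w) ∂μ - ∫ w, min c (g w) ∂μ := by
  have hS : MeasurableSet {w | d ≤ g w} := measurableSet_le measurable_const hg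
  rw [← integral_sub (integrable_min_of_ae_nonneg hg hg0 (hc.trans hcd))
      (integrable_min_of_ae_nonneg hg hg0 hc), mul_comm, ← smul_eq_mul,
    ← integral_indicator_const _ hS]
  refine integral_mono ((integrable_const _).indicator hS)
    ((integrable_min_of_ae_nonneg hg hg0 (hc.trans hcd)).sub
      (integrable_min_of_ae_nonneg hg hg0 hc)) fun w ↦ ?_
  simp only [indicator, mem_ofPred_eq]
  split_ifs with h
  · rw [min_eq_left h, min_eq_left (hcd.trans h)]
  · exact sub_nonneg.2 (min_le_min_right _ hcd)

end IntegralMin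

lemma le_measureReal_Iic_of_forall_Ioo {μ : Measure ℝ} [IsFiniteMeasure μ] {a b r : ℝ}
    (hab : a < b) (h : ∀ t ∈ Ioo a b, r ≤ μ.real (Iio t)) : r ≤ μ.real (Iic a) := by
  have hinter : ⋂ t > a, Iio t = Iic a := by
    ext x
    simp only [mem_iInter, mem_Iio, mem_Iic]
    exact ⟨fun hx ↦ le_of_forall_gt hx, fun hx t ht ↦ hx.trans_lt ht⟩
  have hlim : Tendsto (fun t ↦ μ (Iio t)) (𝓝[>] a) (𝓝 (μ (Iic a))) := by
    rw [← hinter]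
    exact tendsto_measure_biInter_gt (fun _ _ ↦ nullMeasurableSet_Iio)
      (fun _ _ _ hij ↦ Iio_subset_Iio hij) ⟨b, hab, measure_ne_top _ _⟩
  exact ge_of_tendsto ((ENNReal.tendsto_toReal (measure_ne_top _ _)).comp hlim)
    (eventually_of_mem (Ioo_mem_nhdsGT hab) h)

lemma le_measureReal_Ici_of_forall_Ioo {μ : Measure ℝ} [IsFiniteMeasure μ] {a b r : ℝ}
    (hab : a < b) (h : ∀ t ∈ Ioo a b, r ≤ μ.real (Ioi t)) : r ≤ μ.real (Ici b) := by
  have hinter : ⋂ t > -b, Ioi (-t) = Ici b := by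
    ext x
    simp only [mem_iInter, mem_Ioi, mem_Ici, neg_lt]
    exact ⟨fun hx ↦ le_of_forall_lt fun t ht ↦ by linarith [hx (-t) (by linarith)],
      fun hx t ht ↦ by linarith⟩
  have hlim : Tendsto (fun t ↦ μ (Ioi (-t))) (𝓝[>] (-b)) (𝓝 (μ (Ici b))) := by
    rw [← hinter]
    exact tendsto_measure_biInter_gt (fun _ _ ↦ nullMeasurableSet_Ioi)
      (fun _ _ _ hij ↦ Ioi_subset_Ioi (neg_le_neg hij)) ⟨-a, by linarith, measure_ne_top _ _⟩
  refine ge_of_tendsto ((ENNReal.tendsto_toReal (measure_ne_top _ _)).comp hlim)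
    (eventually_of_mem (Ioo_mem_nhdsGT (neg_lt_neg hab)) fun t ht ↦ h (-t) ?_)
  exact ⟨by linarith [ht.2], by linarith [ht.1]⟩

namespace StrictMono

variable {s : ℝ → ℝ} {x y : ℝ}

lemma apply_pos (hmono : StrictMono s) (hs0 : s 0 = 0) (hy : 0 < y) : 0 < s y := hs0 ▸ hmono hy

lemma apply_nonneg (hmono : StrictMono s) (hs0 : s 0 = 0) (hy : 0 ≤ y) : 0 ≤ s y :=
  hs0 ▸ hmono.monotone hy

lemma apply_neg (hmono : StrictMono s) (hs0 : s 0 = 0) (hy : y < 0) : s y < 0 := hs0 ▸ hmono hy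

lemma abs_apply_lt_abs_apply_iff (hmono : StrictMono s) (hs0 : s 0 = 0) (hx : x < 0)
    (hy : y < 0) : |s x| < |s y| ↔ y < x := by
  rw [abs_of_neg (hmono.apply_neg hs0 hx), abs_of_neg (hmono.apply_neg hs0 hy), neg_lt_neg_iff,
    hmono.lt_iff_lt]

lemma abs_apply_le_abs_apply_iff (hmono : StrictMono s) (hs0 : s 0 = 0) (hx : x < 0)
    (hy : y < 0) : |s x| ≤ |s y| ↔ y ≤ x := by
  rw [abs_of_neg (hmono.apply_neg hs0 hx), abs_of_neg (hmono.apply_neg hs0 hy), neg_le_neg_iff,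
    hmono.le_iff_le]

lemma abs_apply_sub_abs_apply (hmono : StrictMono s) (hs0 : s 0 = 0) (hx : x < 0) (hy : y < 0) :
    |s x| - |s y| = s y - s x := by
  rw [abs_of_neg (hmono.apply_neg hs0 hx), abs_of_neg (hmono.apply_neg hs0 hy)]
  ring

end StrictMono

section cY

variable {s : ℝ → ℝ} {ν : Measure ℝ} {a b : ℝ}

lemma cY_of_nonneg (ha : 0 ≤ a) : cY s ν a = ∫ w in Ici 0, min (s a) (s w) ∂ν := if_pos ha

lemma cY_of_neg (ha : a < 0) : cY s ν a = ∫ w in Iio 0, min |s a| |s w| ∂ν := if_neg ha.not_ge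

variable [IsFiniteMeasure ν]

lemma cY_sub_cY_le (hmono : StrictMono s) (hs0 : s 0 = 0) (ha : 0 ≤ a) (hab : a ≤ b) :
    cY s ν b - cY s ν a ≤ (s b - s a) * ν.real (Ioi a) := by
  have hset : {w | s a < s w} ∩ Ici 0 = Ioi a := by
    ext w
    simp only [mem_inter_iff, mem_ofPred_eq, mem_Ici, mem_Ioi, hmono.lt_iff_lt]
    exact and_iff_left_of_imp fun h ↦ ha.trans h.le
  rw [cY_of_nonneg (ha.trans hab), cY_of_nonneg ha, ← hset,
    ← measureReal_restrict_apply' measurableSet_Ici]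
  exact integral_min_sub_integral_min_le hmono.monotone.measurable
    (ae_restrict_of_forall_mem measurableSet_Ici fun w ↦ hmono.apply_nonneg hs0)
    (hmono.apply_nonneg hs0 ha) (hmono.monotone hab)

lemma mul_measureReal_le_cY_sub_cY (hmono : StrictMono s) (hs0 : s 0 = 0) (ha : 0 ≤ a)
    (hab : a ≤ b) : (s b - s a) * ν.real (Ici b) ≤ cY s ν b - cY s ν a := by
  have hset : {w | s b ≤ s w} ∩ Ici 0 = Ici b := by
    ext w
    simp only [mem_inter_iff, mem_ofPred_eq, mem_Ici, hmono.le_iff_le]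
    exact and_iff_left_of_imp fun h ↦ (ha.trans hab).trans h
  rw [cY_of_nonneg (ha.trans hab), cY_of_nonneg ha, ← hset,
    ← measureReal_restrict_apply' measurableSet_Ici]
  exact mul_measureReal_le_integral_min_sub_integral_min hmono.monotone.measurable
    (ae_restrict_of_forall_mem measurableSet_Ici fun w ↦ hmono.apply_nonneg hs0)
    (hmono.apply_nonneg hs0 ha) (hmono.monotone hab)

lemma cY_neg_sub_cY_neg_le (hmono : StrictMono s) (hs0 : s 0 = 0) (ha : 0 < a) (hab : a ≤ b) :
    cY s ν (-b) - cY s ν (-a) ≤ (s (-a) - s (-b)) * ν.real (Iio (-a)) := by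
  have hset : {w | |s (-a)| < |s w|} ∩ Iio 0 = Iio (-a) := by
    ext w
    simp only [mem_inter_iff, mem_ofPred_eq, mem_Iio]
    refine ⟨fun ⟨h, hw⟩ ↦ (hmono.abs_apply_lt_abs_apply_iff hs0 (by linarith) hw).1 h,
      fun hw ↦ ⟨(hmono.abs_apply_lt_abs_apply_iff hs0 (by linarith) (by linarith)).2 hw,
        by linarith⟩⟩
  rw [cY_of_neg (by linarith), cY_of_neg (by linarith),
    ← hmono.abs_apply_sub_abs_apply hs0 (by linarith) (by linarith), ← hset,
    ← measureReal_restrict_apply' measurableSet_Iio]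
  exact integral_min_sub_integral_min_le hmono.monotone.measurable.abs
    (ae_of_all _ fun w ↦ abs_nonneg _) (abs_nonneg _)
    ((hmono.abs_apply_le_abs_apply_iff hs0 (by linarith) (by linarith)).2 (by linarith))

lemma mul_measureReal_le_cY_neg_sub_cY_neg (hmono : StrictMono s) (hs0 : s 0 = 0) (ha : 0 < a)
    (hab : a ≤ b) : (s (-a) - s (-b)) * ν.real (Iic (-b)) ≤ cY s ν (-b) - cY s ν (-a) := by
  have hset : {w | |s (-b)| ≤ |s w|} ∩ Iio 0 = Iic (-b) := by
    ext w
    simp only [mem_inter_iff, mem_ofPred_eq, mem_Iio, mem_Iic]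
    refine ⟨fun ⟨h, hw⟩ ↦ (hmono.abs_apply_le_abs_apply_iff hs0 (by linarith) hw).1 h,
      fun hw ↦ ⟨(hmono.abs_apply_le_abs_apply_iff hs0 (by linarith) (by linarith)).2 hw,
        by linarith⟩⟩
  rw [cY_of_neg (by linarith), cY_of_neg (by linarith),
    ← hmono.abs_apply_sub_abs_apply hs0 (by linarith) (by linarith), ← hset,
    ← measureReal_restrict_apply' measurableSet_Iio]
  exact mul_measureReal_le_integral_min_sub_integral_min hmono.monotone.measurable.abs
    (ae_of_all _ fun w ↦ abs_nonneg _) (abs_nonneg _)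
    ((hmono.abs_apply_le_abs_apply_iff hs0 (by linarith) (by linarith)).2 (by linarith))

end cY

lemma div_le_of_div_le_div_of_sub_le {a₀ a₁ b₀ b₁ A : ℝ} (hb₀ : 0 < b₀) (hb : b₀ < b₁)
    (hdiv : a₀ / b₀ ≤ a₁ / b₁) (hA : a₁ - a₀ ≤ (b₁ - b₀) * A) : a₁ / b₁ ≤ A := by
  have h₁ : a₁ = a₁ / b₁ * b₁ := (div_mul_cancel₀ _ (hb₀.trans hb).ne').symm
  have h₀ : a₀ ≤ a₁ / b₁ * b₀ := (div_le_iff₀ hb₀).1 hdiv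
  refine le_of_mul_le_mul_right ?_ (sub_pos.2 hb)
  calc a₁ / b₁ * (b₁ - b₀) ≤ a₁ - a₀ := by linarith
    _ ≤ A * (b₁ - b₀) := by linarith

lemma div_add_le_one_div_mul_max_add {a g q K A : ℝ} (hq : 0 < q) (hg : 0 ≤ g) (hA : 0 ≤ A)
    (ha : a ≤ K + g * A) : a / (q + g) ≤ 1 / q * max K 0 + A := by
  rw [div_le_iff₀ (by positivity)]
  have hK : K ≤ max K 0 := le_max_left K 0
  have hM : 0 ≤ 1 / q * max K 0 * g := by positivity
  have hq' : 1 / q * max K 0 * q = max K 0 := by field_simp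
  nlinarith

lemma le_mul_ite_sInf_lt_add {S : Set ℝ} {ζ M A z : ℝ} (hS : BddBelow S) (hA : 0 ≤ A)
    (hempty : ¬S.Nonempty → ζ = 0) (hlt : ∀ y ∈ S, y < z → ζ ≤ M + A)
    (hge : ∀ y ∈ S, z ≤ y → ζ ≤ A) :
    ζ ≤ M * (if S.Nonempty ∧ sInf S < z then 1 else 0) + A := by
  split_ifs with h
  · obtain ⟨y, hy, hyz⟩ := exists_lt_of_csInf_lt h.1 h.2
    simpa using hlt y hy hyz
  · rw [mul_zero, zero_add]
    by_cases hne : S.Nonempty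
    · obtain ⟨y, hy⟩ := hne
      exact hge y hy ((not_lt.1 fun h' ↦ h ⟨⟨y, hy⟩, h'⟩).trans (csInf_le hS hy))
    · exact (hempty hne).le.trans hA

section zeta

variable {s : ℝ → ℝ} {ν : Measure ℝ} {x y₀ z : ℝ}

lemma neg_slopeYPlus (y : ℝ) :
    -slopeYPlus s ν z y = (cY s ν (-y) - cY s ν z) / (s z - s (-y)) := by
  rw [slopeYPlus, ← neg_div, neg_sub]

lemma zetaPlus_eq_of_mem (hy₀ : y₀ ∈ argYPlus s ν z) : zetaPlus s ν z = -slopeYPlus s ν z y₀ := by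
  rw [zetaPlus, if_pos ⟨y₀, hy₀⟩]
  exact congrArg Neg.neg <| IsLeast.csInf_eq
    ⟨⟨y₀, hy₀.1, rfl⟩, by rintro _ ⟨x, hx, rfl⟩; exact hy₀.2 x hx⟩

lemma zetaMinus_eq_of_mem (hy₀ : y₀ ∈ argYMinus s ν z) :
    zetaMinus s ν z = slopeYMinus s ν z y₀ := by
  rw [zetaMinus, if_pos ⟨y₀, hy₀⟩]
  exact IsGreatest.csSup_eq ⟨⟨y₀, hy₀.1, rfl⟩, by rintro _ ⟨x, hx, rfl⟩; exact hy₀.2 x hx⟩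

variable [IsFiniteMeasure ν]

lemma zetaPlus_le_measureReal_Iio (hmono : StrictMono s) (hs0 : s 0 = 0) (hz : 0 < z)
    (hy₀ : y₀ ∈ argYPlus s ν z) (hx : 0 < x) (hxy : x < y₀) :
    zetaPlus s ν z ≤ ν.real (Iio (-x)) := by
  rw [zetaPlus_eq_of_mem hy₀, neg_slopeYPlus]
  refine div_le_of_div_le_div_of_sub_le (a₀ := cY s ν (-x) - cY s ν z)
    (sub_pos.2 (hmono (by linarith))) (sub_lt_sub_left (hmono (neg_lt_neg hxy)) _) ?_ ?_
  · rw [← neg_slopeYPlus, ← neg_slopeYPlus]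
    exact neg_le_neg (hy₀.2 x hx)
  · linarith [cY_neg_sub_cY_neg_le (ν := ν) hmono hs0 hx hxy.le]

lemma zetaPlus_le_measureReal_Iic (hmono : StrictMono s) (hs0 : s 0 = 0) (hz : 0 < z)
    (hy₀ : y₀ ∈ argYPlus s ν z) (hzy : z ≤ y₀) :
    zetaPlus s ν z ≤ ν.real (Iic (-z)) :=
  calc zetaPlus s ν z ≤ ν.real (Iic (-y₀)) :=
        le_measureReal_Iic_of_forall_Ioo (b := 0) (by linarith [hy₀.1]) fun t ht ↦ by
          simpa using zetaPlus_le_measureReal_Iio hmono hs0 hz hy₀ (x := -t) (by linarith [ht.2])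
            (by linarith [ht.1])
    _ ≤ ν.real (Iic (-z)) := measureReal_mono (Iic_subset_Iic.2 (neg_le_neg hzy))

lemma zetaPlus_le_of_le (hmono : StrictMono s) (hs0 : s 0 = 0) (hz : 0 < z)
    (hy₀ : y₀ ∈ argYPlus s ν z) (hyz : y₀ ≤ z) :
    zetaPlus s ν z ≤ 1 / s z * max (cY s ν (-z) - cY s ν z - |s (-z)| * ν.real (Iic (-z))) 0
      + ν.real (Iic (-z)) := by
  rw [zetaPlus_eq_of_mem hy₀, neg_slopeYPlus, sub_eq_add_neg (s z)]
  refine div_add_le_one_div_mul_max_add (hmono.apply_pos hs0 hz)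
    (neg_nonneg.2 (hmono.apply_neg hs0 (neg_lt_zero.2 hy₀.1)).le) measureReal_nonneg ?_
  rw [abs_of_neg (hmono.apply_neg hs0 (neg_lt_zero.2 hz))]
  linarith [mul_measureReal_le_cY_neg_sub_cY_neg (ν := ν) hmono hs0 hy₀.1 hyz]

lemma zetaPlus_le (hmono : StrictMono s) (hs0 : s 0 = 0) (hz : 0 < z) :
    zetaPlus s ν z ≤
      1 / s z * max (cY s ν (-z) - cY s ν z - |s (-z)| * ν.real (Iic (-z))) 0 *
          (if (argYPlus s ν z).Nonempty ∧ sInf (argYPlus s ν z) < z then 1 else 0)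
        + ν.real (Iic (-z)) :=
  le_mul_ite_sInf_lt_add ⟨0, fun _ hy ↦ hy.1.le⟩ measureReal_nonneg (fun h ↦ if_neg h)
    (fun _ hy hyz ↦ zetaPlus_le_of_le hmono hs0 hz hy hyz.le)
    (fun _ hy hzy ↦ zetaPlus_le_measureReal_Iic hmono hs0 hz hy hzy)

lemma zetaMinus_le_measureReal_Ioi (hmono : StrictMono s) (hs0 : s 0 = 0) (hz : 0 < z)
    (hy₀ : y₀ ∈ argYMinus s ν z) (hx : 0 < x) (hxy : x < y₀) :
    zetaMinus s ν z ≤ ν.real (Ioi x) := by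
  rw [zetaMinus_eq_of_mem hy₀, slopeYMinus]
  refine div_le_of_div_le_div_of_sub_le (sub_pos.2 (hmono (by linarith)))
    (sub_lt_sub_right (hmono hxy) _) (hy₀.2 x hx) ?_
  linarith [cY_sub_cY_le (ν := ν) hmono hs0 hx.le hxy.le]

lemma zetaMinus_le_measureReal_Ici (hmono : StrictMono s) (hs0 : s 0 = 0) (hz : 0 < z)
    (hy₀ : y₀ ∈ argYMinus s ν z) (hzy : z ≤ y₀) :
    zetaMinus s ν z ≤ ν.real (Ici z) :=
  calc zetaMinus s ν z ≤ ν.real (Ici y₀) := le_measureReal_Ici_of_forall_Ioo hy₀.1 fun _ ht ↦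
        zetaMinus_le_measureReal_Ioi hmono hs0 hz hy₀ ht.1 ht.2
    _ ≤ ν.real (Ici z) := measureReal_mono (Ici_subset_Ici.2 hzy)

lemma zetaMinus_le_of_le (hmono : StrictMono s) (hs0 : s 0 = 0) (hz : 0 < z)
    (hy₀ : y₀ ∈ argYMinus s ν z) (hyz : y₀ ≤ z) :
    zetaMinus s ν z ≤ 1 / |s (-z)| * max (cY s ν z - cY s ν (-z) - s z * ν.real (Ici z)) 0
      + ν.real (Ici z) := by
  have hsz : s (-z) < 0 := hmono.apply_neg hs0 (neg_lt_zero.2 hz)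
  rw [zetaMinus_eq_of_mem hy₀, slopeYMinus, sub_eq_add_neg (s y₀), add_comm, ← abs_of_neg hsz]
  refine div_add_le_one_div_mul_max_add (abs_pos.2 hsz.ne) (hmono.apply_nonneg hs0 hy₀.1.le)
    measureReal_nonneg ?_
  linarith [mul_measureReal_le_cY_sub_cY (ν := ν) hmono hs0 hy₀.1.le hyz]

lemma zetaMinus_le (hmono : StrictMono s) (hs0 : s 0 = 0) (hz : 0 < z) :
    zetaMinus s ν z ≤
      1 / |s (-z)| * max (cY s ν z - cY s ν (-z) - s z * ν.real (Ici z)) 0 *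
          (if (argYMinus s ν z).Nonempty ∧ sInf (argYMinus s ν z) < z then 1 else 0)
        + ν.real (Ici z) :=
  le_mul_ite_sInf_lt_add ⟨0, fun _ hy ↦ hy.1.le⟩ measureReal_nonneg (fun h ↦ if_neg h)
    (fun _ hy hyz ↦ zetaMinus_le_of_le hmono hs0 hz hy hyz.le)
    (fun _ hy hzy ↦ zetaMinus_le_measureReal_Ici hmono hs0 hz hy hzy)

end zeta

lemma measureReal_abs_ge {ν : Measure ℝ} [IsFiniteMeasure ν] {z : ℝ} (hz : 0 < z) :
    ν.real {y | z ≤ |y|} = ν.real (Iic (-z)) + ν.real (Ici z) := by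
  have hset : {y : ℝ | z ≤ |y|} = Iic (-z) ∪ Ici z := by
    ext y
    simp only [mem_ofPred_eq, mem_union, mem_Iic, mem_Ici, le_abs, le_neg]
    tauto
  rw [hset, measureReal_union (Iic_disjoint_Ici.2 (by linarith)) measurableSet_Ici]

/-- The indicator `1_{z > ρ₊(z)}` is nonzero exactly when the infimum defining `ζ₊(z)` is
attained and its smallest minimiser `ρ₊(z) = sInf (argYPlus s ν z)` satisfies `ρ₊(z) < z`;
similarly for `ρ₋`. -/
theorem nuPlus_nuMinus_upper_bounds_general
    (s : ℝ → ℝ) (hmono : StrictMono s) (hs0 : s 0 = 0)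
    (ν : Measure ℝ) [IsProbabilityMeasure ν] :
    ∀ z : ℝ, 0 < z →
      nuPlus s ν z ≤
        (1 / s z) * max (cY s ν (-z) - cY s ν z - |s (-z)| * (ν (Iic (-z))).toReal) 0 *
            (if (argYPlus s ν z).Nonempty ∧ sInf (argYPlus s ν z) < z then (1 : ℝ) else 0)
          + (ν {y : ℝ | z ≤ |y|}).toReal ∧
      nuMinus s ν z ≤
        (1 / |s (-z)|) * max (cY s ν z - cY s ν (-z) - s z * (ν (Ici z)).toReal) 0 *
            (if (argYMinus s ν z).Nonempty ∧ sInf (argYMinus s ν z) < z then (1 : ℝ) else 0)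
          + (ν {y : ℝ | z ≤ |y|}).toReal := by
  intro z hz
  simp only [nuPlus, nuMinus, ← measureReal_def, measureReal_abs_ge hz]
  exact ⟨by linarith [zetaPlus_le (ν := ν) hmono hs0 hz],
    by linarith [zetaMinus_le (ν := ν) hmono hs0 hz]⟩

/-- Lemma 3 of the paper: upper bounds on `ν₊` and `ν₋`.  The indicator
`1_{z > ρ₊(z)}` is nonzero exactly when the infimum defining `ζ₊(z)` is attained and its
smallest minimiser `ρ₊(z) = sInf (argYPlus s ν z)` satisfies `ρ₊(z) < z`; similarly
for `ρ₋`.  `[a]₊ = max a 0`. -/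
theorem nuPlus_nuMinus_upper_bounds
    (s : ℝ → ℝ) (hs : Continuous s) (hmono : StrictMono s) (hs0 : s 0 = 0)
    (ν : Measure ℝ) [IsProbabilityMeasure ν] (hν0 : ν {0} = 0) :
    ∀ z : ℝ, 0 < z →
      nuPlus s ν z ≤
        (1 / s z) * max (cY s ν (-z) - cY s ν z - |s (-z)| * (ν (Iic (-z))).toReal) 0 *
            (if (argYPlus s ν z).Nonempty ∧ sInf (argYPlus s ν z) < z then (1 : ℝ) else 0)
          + (ν {y : ℝ | z ≤ |y|}).toReal ∧
      nuMinus s ν z ≤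
        (1 / |s (-z)|) * max (cY s ν z - cY s ν (-z) - s z * (ν (Ici z)).toReal) 0 *
            (if (argYMinus s ν z).Nonempty ∧ sInf (argYMinus s ν z) < z then (1 : ℝ) else 0)
          + (ν {y : ℝ | z ≤ |y|}).toReal :=
  nuPlus_nuMinus_upper_bounds_general s hmono hs0 ν
end

section
/- For every z > 0 the following lower bounds hold: ν₊(z) ≥ [c_Y(-z) - c_Y(z)]₊ / (s(z) + |s(-z)|) + ν([z,∞)), and ν₋(z) ≥ [c_Y(z) - c_Y(-z)]₊ / (s(z) + |s(-z)|) + ν((-∞,-z]), where [a]₊ = max(a,0). -/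
/-!
For `y > 0`, both `-slopeYPlus z y` and `slopeYMinus z y` are chord slopes
`(g (p y) - c) / (E + p y)` from a point `(-E, c)` with `E > 0`, `c ≥ 0` to the graph of the
nondecreasing, continuous function `g t = ∫ min t u dμ`, where `g 0 = 0` and `g` grows at rate
at most `μ {u > t}`. The claimed bound is `max (slope at y = z) 0`, so it suffices that a maximal
slope is never negative (moving right along a nondecreasing `g` increases a negative
slope) and that a maximal slope is attained once some slope is positive. For the latter, the
slope at `0` is `-c / E ≤ 0`, while beyond a point `y₀` with `μ {u > p y₀} ≤ σ` the slope stays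
below `max (slope y₀) σ` by a mediant argument; so a maximum on the compact `[0, y₀]` is global.
-/

open MeasureTheory Set Filter
open scoped ENNReal NNReal Classical

open Topology

section TruncIntegral

variable {α : Type*} [MeasurableSpace α] {μ : Measure α} {u : α → ℝ}

noncomputable def truncIntegral (μ : Measure α) (u : α → ℝ) (t : ℝ) : ℝ :=
  ∫ w, min t (u w) ∂μ

theorem integrable_min_const [IsFiniteMeasure μ] (hu : Measurable u) (hu0 : ∀ w, 0 ≤ u w)
    (t : ℝ) : Integrable (fun w => min t (u w)) μ := by
  refine (integrable_const |t|).mono' (measurable_const.min hu).aestronglyMeasurable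
    (ae_of_all _ fun w => abs_le.2 ⟨?_, (min_le_left _ _).trans (le_abs_self t)⟩)
  exact le_min (neg_abs_le t) ((neg_nonpos.2 (abs_nonneg t)).trans (hu0 w))

theorem truncIntegral_zero (hu0 : ∀ w, 0 ≤ u w) : truncIntegral μ u 0 = 0 := by
  simp [truncIntegral, fun w => min_eq_left (hu0 w)]

theorem truncIntegral_nonneg (hu0 : ∀ w, 0 ≤ u w) {t : ℝ} (ht : 0 ≤ t) :
    0 ≤ truncIntegral μ u t :=
  integral_nonneg fun w => le_min ht (hu0 w)

theorem truncIntegral_mono [IsFiniteMeasure μ] (hu : Measurable u) (hu0 : ∀ w, 0 ≤ u w) :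
    Monotone (truncIntegral μ u) := fun _ _ h =>
  integral_mono (integrable_min_const hu hu0 _) (integrable_min_const hu hu0 _)
    fun _ => min_le_min_right _ h

theorem truncIntegral_sub_le [IsFiniteMeasure μ] (hu : Measurable u) (hu0 : ∀ w, 0 ≤ u w)
    {t t' : ℝ} (h : t ≤ t') :
    truncIntegral μ u t' - truncIntegral μ u t ≤ (t' - t) * μ.real {w | t < u w} := by
  have hms : MeasurableSet {w | t < u w} := measurableSet_lt measurable_const hu
  have hpt : ∀ w, min t' (u w) - min t (u w) ≤ {w | t < u w}.indicator (fun _ => t' - t) w := by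
    intro w
    by_cases hw : t < u w
    · rw [indicator_of_mem (show w ∈ {w | t < u w} from hw), min_eq_left hw.le]
      linarith [min_le_left t' (u w)]
    · rw [indicator_of_notMem (show w ∉ {w | t < u w} from hw), min_eq_right (not_lt.1 hw),
        min_eq_right ((not_lt.1 hw).trans h), sub_self]
  calc truncIntegral μ u t' - truncIntegral μ u t
      = ∫ w, (min t' (u w) - min t (u w)) ∂μ :=
        (integral_sub (integrable_min_const hu hu0 t') (integrable_min_const hu hu0 t)).symm
    _ ≤ ∫ w, {w | t < u w}.indicator (fun _ => t' - t) w ∂μ :=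
        integral_mono ((integrable_min_const hu hu0 t').sub (integrable_min_const hu hu0 t))
          ((integrable_const _).indicator hms) hpt
    _ = (t' - t) * μ.real {w | t < u w} := by
        rw [integral_indicator_const _ hms, smul_eq_mul, mul_comm]

theorem continuous_truncIntegral [IsFiniteMeasure μ] (hu : Measurable u) (hu0 : ∀ w, 0 ≤ u w) :
    Continuous (truncIntegral μ u) := by
  refine (LipschitzWith.of_le_add_mul' (μ.real univ) fun a b => ?_).continuous
  rcases le_total a b with hab | hab
  · have := truncIntegral_mono hu hu0 (μ := μ) hab
    have : 0 ≤ μ.real univ * dist a b := mul_nonneg measureReal_nonneg dist_nonneg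
    linarith
  · have h₁ := truncIntegral_sub_le (μ := μ) hu hu0 hab
    have h₂ : (a - b) * μ.real {w | b < u w} ≤ (a - b) * μ.real univ :=
      mul_le_mul_of_nonneg_left (measureReal_mono (subset_univ _)) (sub_nonneg.2 hab)
    rw [Real.dist_eq, abs_of_nonneg (sub_nonneg.2 hab)]
    linarith

theorem tendsto_measureReal_setOf_lt_atTop [IsFiniteMeasure μ] (hu : Measurable u)
    {p : ℝ → ℝ} (hp : Monotone p) (hU : ∀ᵐ w ∂μ, ∃ x, u w < p x) :
    Tendsto (fun x => μ.real {w | p x < u w}) atTop (𝓝 0) := by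
  have hnull : μ (⋂ x, {w | p x < u w}) = 0 :=
    measure_eq_zero_iff_ae_notMem.2 <| hU.mono fun w ⟨x, hx⟩ hmem =>
      lt_asymm hx (mem_iInter.1 hmem x)
  have h := tendsto_measure_iInter_atTop
    (fun x => (measurableSet_lt measurable_const hu).nullMeasurableSet)
    (fun a b hab w (hw : p b < u w) => (hp hab).trans_lt hw) ⟨0, measure_ne_top μ _⟩
  rw [hnull] at h
  exact (ENNReal.tendsto_toReal ENNReal.zero_ne_top).comp h

end TruncIntegral

section TruncSlope

variable {α : Type*} [MeasurableSpace α] {μ : Measure α} {u : α → ℝ} {p : ℝ → ℝ} {E c : ℝ}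

noncomputable def truncSlope (μ : Measure α) (u : α → ℝ) (p : ℝ → ℝ) (E c x : ℝ) : ℝ :=
  (truncIntegral μ u (p x) - c) / (E + p x)

theorem truncSlope_nonneg_of_isMaxOn [IsFiniteMeasure μ] (hu : Measurable u)
    (hu0 : ∀ w, 0 ≤ u w) (hE : 0 < E) (hp : StrictMono p) (hp0 : p 0 = 0) {y : ℝ} (hy : 0 < y)
    (hmax : IsMaxOn (truncSlope μ u p E c) (Ioi 0) y) : 0 ≤ truncSlope μ u p E c y := by
  by_contra! hneg
  have hpy : 0 < p y := hp0 ▸ hp hy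
  have hpy' : p y < p (y + 1) := hp (lt_add_one y)
  have hD : 0 < E + p y := by linarith
  have hnum : truncIntegral μ u (p y) - c < 0 := by
    by_contra! hn
    exact hneg.not_ge (div_nonneg hn hD.le)
  -- a larger denominator makes the negative slope strictly larger
  have hlt : truncSlope μ u p E c y < truncSlope μ u p E c (y + 1) := by
    have hg := truncIntegral_mono (μ := μ) hu hu0 hpy'.le
    rw [truncSlope, truncSlope, div_lt_div_iff₀ hD (by linarith)]
    nlinarith
  exact (hmax (show y + 1 ∈ Ioi 0 by simp only [mem_Ioi]; linarith)).not_gt hlt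

theorem truncSlope_le_max_of_le [IsFiniteMeasure μ] (hu : Measurable u)
    (hu0 : ∀ w, 0 ≤ u w) (hE : 0 < E) (hp : Monotone p) {x₀ x σ : ℝ} (hpx₀ : 0 ≤ p x₀)
    (hσ : μ.real {w | p x₀ < u w} ≤ σ) (hx : x₀ ≤ x) :
    truncSlope μ u p E c x ≤ max (truncSlope μ u p E c x₀) σ := by
  set M := max (truncSlope μ u p E c x₀) σ
  have hpx := hp hx
  have h₀ : truncIntegral μ u (p x₀) - c ≤ M * (E + p x₀) :=
    (div_le_iff₀ (by linarith)).1 (le_max_left _ σ)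
  have h₁ : truncIntegral μ u (p x) - truncIntegral μ u (p x₀) ≤ M * (p x - p x₀) :=
    calc _ ≤ (p x - p x₀) * μ.real {w | p x₀ < u w} := truncIntegral_sub_le hu hu0 hpx
      _ ≤ (p x - p x₀) * M :=
        mul_le_mul_of_nonneg_left (hσ.trans (le_max_right _ σ)) (sub_nonneg.2 hpx)
      _ = M * (p x - p x₀) := mul_comm _ _
  rw [truncSlope, div_le_iff₀ (by linarith)]
  linarith

theorem exists_isMaxOn_truncSlope [IsFiniteMeasure μ] (hu : Measurable u)
    (hu0 : ∀ w, 0 ≤ u w) (hU : ∀ᵐ w ∂μ, ∃ x, u w < p x) (hE : 0 < E) (hc : 0 ≤ c)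
    (hp : Continuous p) (hpm : Monotone p) (hp0 : p 0 = 0) {z : ℝ} (hz : 0 < z)
    (hpos : 0 < truncSlope μ u p E c z) :
    ∃ y ∈ Ioi 0, IsMaxOn (truncSlope μ u p E c) (Ioi 0) y := by
  set F := truncSlope μ u p E c
  have hp_nonneg : ∀ {x}, 0 ≤ x → 0 ≤ p x := fun hx => hp0 ▸ hpm hx
  obtain ⟨x₀, hσ, hzx₀⟩ := (((tendsto_measureReal_setOf_lt_atTop hu hpm hU).eventually
    (gt_mem_nhds (half_pos hpos))).and (eventually_ge_atTop z)).exists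
  have hcont : ContinuousOn F (Icc 0 x₀) :=
    (((continuous_truncIntegral hu hu0).comp hp).sub continuous_const).continuousOn.div
      (continuous_const.add hp).continuousOn fun x hx => by linarith [hp_nonneg hx.1]
  obtain ⟨y, hy, hmax⟩ := isCompact_Icc.exists_isMaxOn ⟨z, hz.le, hzx₀⟩ hcont
  have hzy : F z ≤ F y := hmax ⟨hz.le, hzx₀⟩
  have hF0 : F 0 ≤ 0 := by
    simp only [F, truncSlope, hp0, truncIntegral_zero hu0, add_zero]
    exact div_nonpos_of_nonpos_of_nonneg (by linarith) hE.le
  have hy0 : 0 < y := hy.1.lt_of_ne fun h => by subst h; linarith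
  refine ⟨y, hy0, fun x (hx : 0 < x) => ?_⟩
  rcases le_total x x₀ with hxx₀ | hx₀x
  · exact hmax ⟨hx.le, hxx₀⟩
  · calc F x ≤ max (F x₀) (F z / 2) :=
          truncSlope_le_max_of_le hu hu0 hE hpm (hp_nonneg (hz.le.trans hzx₀)) hσ.le hx₀x
      _ ≤ F y := max_le (hmax ⟨hz.le.trans hzx₀, le_rfl⟩) (by linarith)

end TruncSlope

theorem max_le_ite_sSup_of_eqOn {G h : ℝ → ℝ} {S : Set ℝ} {z : ℝ} (hGh : EqOn G h S)
    (hz : z ∈ S) (hnonneg : ∀ y ∈ S, IsMaxOn h S y → 0 ≤ h y)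
    (hex : 0 < h z → ∃ y ∈ S, IsMaxOn h S y) :
    max (G z) 0 ≤ if ∃ y ∈ S, IsMaxOn G S y then sSup (G '' S) else 0 := by
  have hiff : ∀ y ∈ S, IsMaxOn G S y ↔ IsMaxOn h S y := fun y hy =>
    (eventuallyEq_principal.2 hGh).isMaxFilter_iff (hGh hy)
  split_ifs with hmax
  · obtain ⟨y, hy, hyG⟩ := hmax
    have hsup : IsGreatest (G '' S) (G y) :=
      ⟨mem_image_of_mem G hy, by rintro _ ⟨x, hx, rfl⟩; exact hyG hx⟩
    rw [hsup.csSup_eq]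
    exact max_le (hyG hz) ((hGh hy).symm ▸ hnonneg y hy ((hiff y hy).1 hyG))
  · rw [hGh hz]
    refine max_le ?_ le_rfl
    by_contra! hpos
    obtain ⟨y, hy, hyh⟩ := hex hpos
    exact hmax ⟨y, hy, (hiff y hy).2 hyh⟩

section Slopes

variable {s : ℝ → ℝ} {ν : Measure ℝ}

theorem cY_neg_eq_truncIntegral (hmono : StrictMono s) (hs0 : s 0 = 0) {y : ℝ} (hy : 0 < y) :
    cY s ν (-y) = truncIntegral (ν.restrict (Iio 0)) (fun w => |s w|) (-s (-y)) := by
  have hsy : s (-y) < 0 := hs0 ▸ hmono (neg_lt_zero.2 hy)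
  rw [cY, if_neg (by linarith), abs_of_neg hsy, truncIntegral]

theorem cY_eq_truncIntegral (hmono : StrictMono s) (hs0 : s 0 = 0) {y : ℝ} (hy : 0 ≤ y) :
    cY s ν y = truncIntegral (ν.restrict (Ici 0)) (fun w => |s w|) (s y) := by
  rw [cY, if_pos hy, truncIntegral]
  refine setIntegral_congr_fun measurableSet_Ici fun w (hw : 0 ≤ w) => ?_
  rw [abs_of_nonneg (hs0 ▸ hmono.monotone hw)]

theorem eqOn_neg_slopeYPlus (hmono : StrictMono s) (hs0 : s 0 = 0) (z : ℝ) :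
    EqOn (fun y => -slopeYPlus s ν z y)
      (truncSlope (ν.restrict (Iio 0)) (fun w => |s w|) (fun x => -s (-x)) (s z) (cY s ν z))
      (Ioi 0) := fun y (hy : 0 < y) => by
  simp only [slopeYPlus, truncSlope]
  rw [cY_neg_eq_truncIntegral hmono hs0 hy, ← neg_div, neg_sub, ← sub_eq_add_neg]

theorem eqOn_slopeYMinus (hmono : StrictMono s) (hs0 : s 0 = 0) (z : ℝ) :
    EqOn (slopeYMinus s ν z)
      (truncSlope (ν.restrict (Ici 0)) (fun w => |s w|) s (-s (-z)) (cY s ν (-z))) (Ioi 0) :=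
  fun y (hy : 0 < y) => by
  rw [slopeYMinus, truncSlope, cY_eq_truncIntegral hmono hs0 hy.le, neg_add_eq_sub]

theorem zetaPlus_eq_ite_sSup (s : ℝ → ℝ) (ν : Measure ℝ) (z : ℝ) :
    zetaPlus s ν z =
      if ∃ y ∈ Ioi 0, IsMaxOn (fun y => -slopeYPlus s ν z y) (Ioi 0) y
      then sSup ((fun y => -slopeYPlus s ν z y) '' Ioi 0) else 0 := by
  have hiff : (argYPlus s ν z).Nonempty ↔
      ∃ y ∈ Ioi 0, IsMaxOn (fun y => -slopeYPlus s ν z y) (Ioi 0) y := by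
    simp only [argYPlus, isMaxOn_iff, Set.Nonempty, mem_ofPred_eq, mem_Ioi, neg_le_neg_iff]
  have himg : (fun y => -slopeYPlus s ν z y) '' Ioi 0 = -(slopeYPlus s ν z '' Ioi 0) := by
    rw [← image_neg_eq_neg, image_image]
  rw [zetaPlus, himg, Real.sSup_neg]
  exact if_congr hiff rfl rfl

theorem max_neg_slopeYPlus_le_zetaPlus [IsFiniteMeasure ν] (hs : Continuous s)
    (hmono : StrictMono s) (hs0 : s 0 = 0) {z : ℝ} (hz : 0 < z) :
    max (-slopeYPlus s ν z z) 0 ≤ zetaPlus s ν z := by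
  have hu0 : ∀ w, 0 ≤ |s w| := fun w => abs_nonneg (s w)
  have hp : StrictMono fun x => -s (-x) := fun a b hab => neg_lt_neg (hmono (neg_lt_neg hab))
  have hp0 : (fun x => -s (-x)) 0 = 0 := by simp [hs0]
  have hU : ∀ᵐ w ∂ν.restrict (Iio 0), ∃ x, |s w| < -s (-x) :=
    ae_restrict_of_forall_mem measurableSet_Iio fun w (hw : w < 0) =>
      ⟨1 - w, by rw [abs_of_neg (hs0 ▸ hmono hw)]; exact neg_lt_neg (hmono (by linarith))⟩
  have hE : 0 < s z := hs0 ▸ hmono hz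
  have hc : 0 ≤ cY s ν z := by
    rw [cY_eq_truncIntegral hmono hs0 hz.le]
    exact truncIntegral_nonneg hu0 hE.le
  rw [zetaPlus_eq_ite_sSup]
  exact max_le_ite_sSup_of_eqOn (eqOn_neg_slopeYPlus hmono hs0 z) hz
    (fun y hy => truncSlope_nonneg_of_isMaxOn hs.abs.measurable hu0 hE hp hp0 hy)
    (exists_isMaxOn_truncSlope hs.abs.measurable hu0 hU hE hc (by fun_prop) hp.monotone hp0 hz)

theorem max_slopeYMinus_le_zetaMinus [IsFiniteMeasure ν] (hs : Continuous s)
    (hmono : StrictMono s) (hs0 : s 0 = 0) {z : ℝ} (hz : 0 < z) :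
    max (slopeYMinus s ν z z) 0 ≤ zetaMinus s ν z := by
  have hu0 : ∀ w, 0 ≤ |s w| := fun w => abs_nonneg (s w)
  have hU : ∀ᵐ w ∂ν.restrict (Ici 0), ∃ x, |s w| < s x :=
    ae_restrict_of_forall_mem measurableSet_Ici fun w (hw : 0 ≤ w) =>
      ⟨w + 1, by rw [abs_of_nonneg (hs0 ▸ hmono.monotone hw)]; exact hmono (lt_add_one w)⟩
  have hE : 0 < -s (-z) := neg_pos.2 (hs0 ▸ hmono (neg_lt_zero.2 hz))
  have hc : 0 ≤ cY s ν (-z) := by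
    rw [cY_neg_eq_truncIntegral hmono hs0 hz]
    exact truncIntegral_nonneg hu0 hE.le
  exact max_le_ite_sSup_of_eqOn (eqOn_slopeYMinus hmono hs0 z) hz
    (fun y hy => truncSlope_nonneg_of_isMaxOn hs.abs.measurable hu0 hE hmono hs0 hy)
    (exists_isMaxOn_truncSlope hs.abs.measurable hu0 hU hE hc hs hmono.monotone hs0 hz)

end Slopes

theorem nuPlus_nuMinus_lower_bounds_general
    (s : ℝ → ℝ) (hs : Continuous s) (hmono : StrictMono s) (hs0 : s 0 = 0)
    (ν : Measure ℝ) [IsProbabilityMeasure ν] :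
    ∀ z : ℝ, 0 < z →
      nuPlus s ν z ≥
        max (cY s ν (-z) - cY s ν z) 0 / (s z + |s (-z)|) + (ν (Ici z)).toReal ∧
      nuMinus s ν z ≥
        max (cY s ν z - cY s ν (-z)) 0 / (s z + |s (-z)|) + (ν (Iic (-z))).toReal := by
  intro z hz
  have hD : s z + |s (-z)| = s z - s (-z) := by
    rw [abs_of_neg (hs0 ▸ hmono (neg_lt_zero.2 hz)), sub_eq_add_neg]
  have hmax : ∀ a, max a 0 / (s z + |s (-z)|) = max (a / (s z - s (-z))) 0 := fun a => by
    rw [hD, ← max_div_div_right (by linarith [hmono (neg_lt_self hz)]), zero_div]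
  have hplus := max_neg_slopeYPlus_le_zetaPlus (ν := ν) hs hmono hs0 hz
  rw [slopeYPlus, ← neg_div, neg_sub] at hplus
  refine ⟨?_, ?_⟩
  · rw [ge_iff_le, nuPlus, hmax, add_le_add_iff_right]
    exact hplus
  · rw [ge_iff_le, nuMinus, hmax, add_comm, add_le_add_iff_left]
    exact max_slopeYMinus_le_zetaMinus hs hmono hs0 hz

/-- Lemma 4 of the paper: lower bounds on `ν₊` and `ν₋`, where
`[a]₊ = max a 0`. -/
theorem nuPlus_nuMinus_lower_bounds
    (s : ℝ → ℝ) (hs : Continuous s) (hmono : StrictMono s) (hs0 : s 0 = 0)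
    (ν : Measure ℝ) [IsProbabilityMeasure ν] (hν0 : ν {0} = 0) :
    ∀ z : ℝ, 0 < z →
      nuPlus s ν z ≥
        max (cY s ν (-z) - cY s ν z) 0 / (s z + |s (-z)|) + (ν (Ici z)).toReal ∧
      nuMinus s ν z ≥
        max (cY s ν z - cY s ν (-z)) 0 / (s z + |s (-z)|) + (ν (Iic (-z))).toReal :=
  nuPlus_nuMinus_lower_bounds_general s hs hmono hs0 ν
end

section
/- For every z > 0 one has the two-sided bound: (1/s(z) + 1/|s(-z)|) · |c_Y(z) - c_Y(-z)| + 2 ν({y : |y| ≥ z}) ≥ ν₊(z) + ν₋(z) ≥ |c_Y(z) - c_Y(-z)| / (s(z) + |s(-z)|) + ν({y : |y| ≥ z}). -/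
open MeasureTheory Set Filter
open scoped ENNReal NNReal Classical
open scoped Topology

lemma tendsto_measureReal_Ioi_atTop (μ : Measure ℝ) [IsFiniteMeasure μ] :
    Tendsto (fun Y => μ.real (Ioi Y)) atTop (𝓝 0) := by
  have h := tendsto_measure_iInter_atTop (μ := μ) (fun Y : ℝ => measurableSet_Ioi.nullMeasurableSet)
    (fun _ _ hab => Ioi_subset_Ioi hab) ⟨0, measure_ne_top μ _⟩
  have hempty : ⋂ Y : ℝ, Ioi Y = ∅ := iInter_eq_empty_iff.2 fun x => ⟨x, lt_irrefl x⟩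
  rw [hempty, measure_empty] at h
  exact (ENNReal.tendsto_toReal ENNReal.zero_ne_top).comp h

lemma min_sub_min_le_abs (a b x : ℝ) : min a x - min b x ≤ |a - b| := by
  simpa using (le_abs_self _).trans (abs_min_sub_min_le_max a x b x)

noncomputable def minIntegral (φ : ℝ → ℝ) (μ : Measure ℝ) (u : ℝ) : ℝ :=
  ∫ v in Ioi 0, min u (φ v) ∂μ

section MinIntegral

variable {φ : ℝ → ℝ} {μ : Measure ℝ}

lemma integrableOn_min_comp [IsFiniteMeasure μ] (hφ : Monotone φ) (hφ0 : φ 0 = 0) (u : ℝ) :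
    IntegrableOn (fun v => min u (φ v)) (Ioi 0) μ := by
  refine Integrable.mono' (integrable_const |u|)
    (measurable_const.min hφ.measurable).aestronglyMeasurable ?_
  refine (ae_restrict_iff' measurableSet_Ioi).2 (ae_of_all _ fun v hv => ?_)
  have hφv : 0 ≤ φ v := hφ0 ▸ hφ (le_of_lt hv)
  rw [Real.norm_eq_abs, abs_le]
  exact ⟨le_min (neg_abs_le u) (by linarith [abs_nonneg u]),
    (min_le_left _ _).trans (le_abs_self u)⟩

lemma minIntegral_nonneg (hφ : Monotone φ) (hφ0 : φ 0 = 0) {u : ℝ} (hu : 0 ≤ u) :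
    0 ≤ minIntegral φ μ u :=
  setIntegral_nonneg measurableSet_Ioi fun _ hv => le_min hu (hφ0 ▸ hφ (le_of_lt hv))

lemma minIntegral_zero (hφ : Monotone φ) (hφ0 : φ 0 = 0) : minIntegral φ μ 0 = 0 :=
  setIntegral_eq_zero_of_forall_eq_zero fun _ hv => min_eq_left (hφ0 ▸ hφ (le_of_lt hv))

lemma minIntegral_mono [IsFiniteMeasure μ] (hφ : Monotone φ) (hφ0 : φ 0 = 0) :
    Monotone (minIntegral φ μ) :=
  fun _ _ h => setIntegral_mono_on (integrableOn_min_comp hφ hφ0 _)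
    (integrableOn_min_comp hφ hφ0 _) measurableSet_Ioi fun _ _ => min_le_min_right _ h

lemma minIntegral_sub_minIntegral [IsFiniteMeasure μ] (hφ : Monotone φ) (hφ0 : φ 0 = 0) (u u' : ℝ) :
    minIntegral φ μ u' - minIntegral φ μ u = ∫ v in Ioi 0, (min u' (φ v) - min u (φ v)) ∂μ :=
  (integral_sub (integrableOn_min_comp hφ hφ0 u') (integrableOn_min_comp hφ hφ0 u)).symm

lemma continuous_minIntegral [IsFiniteMeasure μ] (hφ : Monotone φ) (hφ0 : φ 0 = 0) :
    Continuous (minIntegral φ μ) := by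
  refine (LipschitzWith.of_le_add_mul' (μ.real (Ioi 0)) fun u' u => ?_).continuous
  have : ∫ v in Ioi 0, (min u' (φ v) - min u (φ v)) ∂μ ≤ ∫ _ in Ioi 0, dist u' u ∂μ :=
    setIntegral_mono_on ((integrableOn_min_comp hφ hφ0 u').sub (integrableOn_min_comp hφ hφ0 u))
      integrableOn_const measurableSet_Ioi fun v _ => min_sub_min_le_abs u' u (φ v)
  rw [← minIntegral_sub_minIntegral hφ hφ0, setIntegral_const, smul_eq_mul] at this
  linarith

lemma setIntegral_Ioi_indicator_Ioi [IsFiniteMeasure μ] {y : ℝ} (hy : 0 ≤ y) (d : ℝ) :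
    ∫ v in Ioi 0, (Ioi y).indicator (fun _ => d) v ∂μ = d * μ.real (Ioi y) := by
  rw [integral_indicator_const _ measurableSet_Ioi, measureReal_restrict_apply measurableSet_Ioi,
    inter_eq_left.2 (Ioi_subset_Ioi hy), smul_eq_mul, mul_comm]

lemma minIntegral_comp_sub_le [IsFiniteMeasure μ] (hφ : Monotone φ) (hφ0 : φ 0 = 0) {y y' : ℝ}
    (hy : 0 ≤ y) (h : y ≤ y') :
    minIntegral φ μ (φ y') - minIntegral φ μ (φ y) ≤ (φ y' - φ y) * μ.real (Ioi y) := by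
  rw [minIntegral_sub_minIntegral hφ hφ0, ← setIntegral_Ioi_indicator_Ioi hy]
  refine setIntegral_mono_on ((integrableOn_min_comp hφ hφ0 _).sub
    (integrableOn_min_comp hφ hφ0 _)) ((integrableOn_const (μ := μ)).indicator measurableSet_Ioi)
    measurableSet_Ioi fun v _ => ?_
  by_cases hv : v ∈ Ioi y
  · rw [indicator_of_mem hv]
    exact (min_sub_min_le_abs _ _ _).trans_eq (abs_of_nonneg (sub_nonneg.2 (hφ h)))
  · have hvy : φ v ≤ φ y := hφ (not_lt.1 hv)
    rw [indicator_of_notMem hv, min_eq_right hvy, min_eq_right (hvy.trans (hφ h)), sub_self]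

lemma le_minIntegral_comp_sub [IsFiniteMeasure μ] (hφ : Monotone φ) (hφ0 : φ 0 = 0) {y y' : ℝ}
    (hy' : 0 ≤ y') (h : y ≤ y') :
    (φ y' - φ y) * μ.real (Ioi y') ≤ minIntegral φ μ (φ y') - minIntegral φ μ (φ y) := by
  rw [minIntegral_sub_minIntegral hφ hφ0, ← setIntegral_Ioi_indicator_Ioi hy']
  refine setIntegral_mono_on ((integrableOn_const (μ := μ)).indicator measurableSet_Ioi)
    ((integrableOn_min_comp hφ hφ0 _).sub (integrableOn_min_comp hφ hφ0 _))
    measurableSet_Ioi fun v _ => ?_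
  by_cases hv : v ∈ Ioi y'
  · have hv' : φ y' ≤ φ v := hφ (le_of_lt hv)
    rw [indicator_of_mem hv, min_eq_left hv', min_eq_left ((hφ h).trans hv')]
  · rw [indicator_of_notMem hv, sub_nonneg]
    exact min_le_min_right _ (hφ h)

end MinIntegral

noncomputable def minIntegralSlope (φ : ℝ → ℝ) (μ : Measure ℝ) (c T y : ℝ) : ℝ :=
  (minIntegral φ μ (φ y) - c) / (φ y + T)

section MinIntegralSlope

variable {φ : ℝ → ℝ} {μ : Measure ℝ} [IsFiniteMeasure μ] {c T : ℝ}

lemma minIntegralSlope_le (hφ : Monotone φ) (hφ0 : φ 0 = 0) (hT : 0 < T) {y z : ℝ} (hy : 0 ≤ y)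
    (hz : 0 ≤ z) :
    minIntegralSlope φ μ c T y ≤ μ.real (Ioi z) + |minIntegral φ μ (φ z) - c| / T := by
  have hφy : 0 ≤ φ y := hφ0 ▸ hφ hy
  have hD : 0 < φ y + T := by linarith
  have hm : 0 ≤ μ.real (Ioi z) := measureReal_nonneg
  have hN : minIntegral φ μ (φ z) - c ≤ |minIntegral φ μ (φ z) - c| / T * (φ y + T) := by
    rw [div_mul_eq_mul_div, le_div_iff₀ hT]
    nlinarith [le_abs_self (minIntegral φ μ (φ z) - c), abs_nonneg (minIntegral φ μ (φ z) - c)]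
  rw [minIntegralSlope, div_le_iff₀ hD, add_mul]
  rcases le_total y z with hyz | hzy
  · have := minIntegral_mono (μ := μ) hφ hφ0 (hφ hyz)
    nlinarith
  · have := minIntegral_comp_sub_le (μ := μ) hφ hφ0 hz hzy
    nlinarith [hφ0 ▸ hφ hz]

lemma minIntegralSlope_le_of_le (hφ : Monotone φ) (hφ0 : φ 0 = 0) (hT : 0 < T) {Y y : ℝ}
    (hY : 0 ≤ Y) (hYy : Y ≤ y)
    (hdom : μ.real (Ioi Y) * (φ Y + T) ≤ minIntegral φ μ (φ Y) - c) :
    minIntegralSlope φ μ c T y ≤ minIntegralSlope φ μ c T Y := by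
  have hDY : 0 < φ Y + T := by linarith [hφ0 ▸ hφ hY]
  have hDy : 0 < φ y + T := by linarith [hφ hYy]
  have hinc := minIntegral_comp_sub_le (μ := μ) hφ hφ0 hY hYy
  rw [minIntegralSlope, minIntegralSlope, div_le_div_iff₀ hDy hDY]
  nlinarith [mul_le_mul_of_nonneg_left hdom (sub_nonneg.2 (hφ hYy)),
    mul_le_mul_of_nonneg_right hinc hDY.le]

lemma minIntegralSlope_nonneg_of_isMaxOn (hφ : StrictMono φ) (hφ0 : φ 0 = 0) (hT : 0 < T)
    {ρ : ℝ} (hρ : 0 < ρ) (hmax : IsMaxOn (minIntegralSlope φ μ c T) (Ioi 0) ρ) :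
    0 ≤ minIntegralSlope φ μ c T ρ := by
  by_contra! hneg
  have hD : 0 < φ ρ + T := by linarith [hφ0 ▸ hφ hρ]
  have hD' : φ ρ + T < φ (ρ + 1) + T := by linarith [hφ (lt_add_one ρ)]
  have hN : minIntegral φ μ (φ ρ) - c < 0 := by
    by_contra! hN
    exact hneg.not_ge (div_nonneg hN hD.le)
  have hmono := minIntegral_mono (μ := μ) hφ.monotone hφ0 (hφ (lt_add_one ρ)).le
  -- a negative slope strictly increases when the denominator grows
  have : minIntegralSlope φ μ c T ρ < minIntegralSlope φ μ c T (ρ + 1) :=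
    calc minIntegralSlope φ μ c T ρ
        < (minIntegral φ μ (φ ρ) - c) / (φ (ρ + 1) + T) := by
          rw [minIntegralSlope, div_lt_div_iff₀ hD (hD.trans hD')]
          nlinarith
      _ ≤ minIntegralSlope φ μ c T (ρ + 1) :=
          div_le_div_of_nonneg_right (by linarith) (hD.trans hD').le
  exact this.not_ge (hmax (mem_Ioi.2 (by linarith)))

/-- The slope at `0` is `-c/T ≤ 0` and the slope cannot grow beyond a far enough point `Y`, so a
positive value forces the maximum over the compact `[0, Y]` to be a maximum over `(0, ∞)`. -/
lemma exists_isMaxOn_minIntegralSlope (hφc : Continuous φ) (hφ : Monotone φ) (hφ0 : φ 0 = 0)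
    (hT : 0 < T) (hc : 0 ≤ c) {z₀ : ℝ} (hz₀ : 0 < z₀) (hpos : 0 < minIntegralSlope φ μ c T z₀) :
    ∃ ρ, 0 < ρ ∧ IsMaxOn (minIntegralSlope φ μ c T) (Ioi 0) ρ := by
  set g := minIntegralSlope φ μ c T
  have hD : ∀ y, 0 ≤ y → 0 < φ y + T := fun y hy => by linarith [hφ0 ▸ hφ hy]
  have hN₀ : 0 < minIntegral φ μ (φ z₀) - c := by
    by_contra! h
    exact hpos.not_ge (div_nonpos_of_nonpos_of_nonneg h (hD z₀ hz₀.le).le)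
  obtain ⟨Y, hYsmall, hz₀Y⟩ : ∃ Y, μ.real (Ioi Y) * (φ z₀ + T) < minIntegral φ μ (φ z₀) - c ∧
      z₀ ≤ Y :=
    ((((tendsto_measureReal_Ioi_atTop μ).mul_const (φ z₀ + T)).eventually_lt_const
      (by rwa [zero_mul])).and (eventually_ge_atTop z₀)).exists
  have hY : 0 ≤ Y := hz₀.le.trans hz₀Y
  have hdom : μ.real (Ioi Y) * (φ Y + T) ≤ minIntegral φ μ (φ Y) - c := by
    have := le_minIntegral_comp_sub (μ := μ) hφ hφ0 hY hz₀Y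
    linarith
  have htail : ∀ y, Y ≤ y → g y ≤ g Y := fun y hy =>
    minIntegralSlope_le_of_le hφ hφ0 hT hY hy hdom
  have hcont : ContinuousOn g (Icc 0 Y) :=
    ((continuous_minIntegral hφ hφ0).comp hφc |>.sub continuous_const).continuousOn.div
      (hφc.add continuous_const).continuousOn fun y hy => (hD y hy.1).ne'
  obtain ⟨ρ, hρ, hmax⟩ := isCompact_Icc.exists_isMaxOn ⟨0, le_rfl, hY⟩ hcont
  have hg0 : g 0 ≤ 0 := by
    simp only [g, minIntegralSlope, hφ0, minIntegral_zero hφ hφ0, zero_sub, zero_add]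
    exact div_nonpos_of_nonpos_of_nonneg (neg_nonpos.2 hc) hT.le
  have hρ0 : 0 < ρ := by
    refine lt_of_le_of_ne hρ.1 fun h => ?_
    have : g z₀ ≤ g 0 := h ▸ hmax ⟨hz₀.le, hz₀Y⟩
    linarith
  refine ⟨ρ, hρ0, fun x hx => ?_⟩
  rcases le_total x Y with hxY | hYx
  · exact hmax ⟨le_of_lt hx, hxY⟩
  · exact (htail x hYx).trans (hmax ⟨hY, le_rfl⟩)

end MinIntegralSlope

noncomputable def attainedSupIoi (f : ℝ → ℝ) : ℝ :=
  if ∃ ρ, 0 < ρ ∧ IsMaxOn f (Ioi 0) ρ then sSup (f '' Ioi 0) else 0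

section AttainedSupIoi

variable {f : ℝ → ℝ}

lemma attainedSupIoi_eq {ρ : ℝ} (hρ : 0 < ρ) (hmax : IsMaxOn f (Ioi 0) ρ) :
    attainedSupIoi f = f ρ := by
  rw [attainedSupIoi, if_pos ⟨ρ, hρ, hmax⟩]
  exact IsGreatest.csSup_eq ⟨mem_image_of_mem f hρ, forall_mem_image.2 fun _ hx => hmax hx⟩

lemma le_attainedSupIoi {z : ℝ} (hz : 0 < z)
    (hex : 0 < f z → ∃ ρ, 0 < ρ ∧ IsMaxOn f (Ioi 0) ρ)
    (hnonneg : ∀ ρ, 0 < ρ → IsMaxOn f (Ioi 0) ρ → 0 ≤ f ρ) :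
    max (f z) 0 ≤ attainedSupIoi f := by
  by_cases h : ∃ ρ, 0 < ρ ∧ IsMaxOn f (Ioi 0) ρ
  · obtain ⟨ρ, hρ, hmax⟩ := h
    rw [attainedSupIoi_eq hρ hmax]
    exact max_le (hmax hz) (hnonneg ρ hρ hmax)
  · rw [attainedSupIoi, if_neg h, max_le_iff]
    exact ⟨not_lt.1 fun hpos => h (hex hpos), le_rfl⟩

lemma attainedSupIoi_le {B : ℝ} (hB : ∀ y, 0 < y → f y ≤ B) (hB0 : 0 ≤ B) :
    attainedSupIoi f ≤ B := by
  by_cases h : ∃ ρ, 0 < ρ ∧ IsMaxOn f (Ioi 0) ρ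
  · obtain ⟨ρ, hρ, hmax⟩ := h
    exact (attainedSupIoi_eq hρ hmax).trans_le (hB ρ hρ)
  · rwa [attainedSupIoi, if_neg h]

end AttainedSupIoi

section MinIntegralSlope

variable {φ : ℝ → ℝ} {μ : Measure ℝ} [IsFiniteMeasure μ] {c T : ℝ}

lemma le_attainedSupIoi_minIntegralSlope (hφc : Continuous φ) (hφ : StrictMono φ)
    (hφ0 : φ 0 = 0) (hT : 0 < T) (hc : 0 ≤ c) {z : ℝ} (hz : 0 < z) :
    max (minIntegralSlope φ μ c T z) 0 ≤ attainedSupIoi (minIntegralSlope φ μ c T) :=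
  le_attainedSupIoi hz (exists_isMaxOn_minIntegralSlope hφc hφ.monotone hφ0 hT hc hz)
    fun _ hρ => minIntegralSlope_nonneg_of_isMaxOn hφ hφ0 hT hρ

lemma attainedSupIoi_minIntegralSlope_le (hφ : Monotone φ) (hφ0 : φ 0 = 0) (hT : 0 < T) {z : ℝ}
    (hz : 0 ≤ z) :
    attainedSupIoi (minIntegralSlope φ μ c T) ≤
      μ.real (Ioi z) + |minIntegral φ μ (φ z) - c| / T :=
  attainedSupIoi_le (fun _ hy => minIntegralSlope_le hφ hφ0 hT hy.le hz) (by positivity)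

end MinIntegralSlope

section ZetaBounds

variable {s : ℝ → ℝ} {ν : Measure ℝ} {z : ℝ}

lemma cY_nonneg (hmono : Monotone s) (hs0 : s 0 = 0) (y : ℝ) : 0 ≤ cY s ν y := by
  rw [cY]
  split_ifs with hy
  · exact setIntegral_nonneg measurableSet_Ici fun w hw => le_min (hs0 ▸ hmono hy) (hs0 ▸ hmono hw)
  · exact integral_nonneg fun _ => le_min (abs_nonneg _) (abs_nonneg _)

lemma cY_of_nonneg_s13 (hmono : Monotone s) (hs0 : s 0 = 0) {y : ℝ} (hy : 0 ≤ y) :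
    cY s ν y = minIntegral s ν (s y) := by
  rw [cY, if_pos hy, minIntegral,
    setIntegral_eq_of_subset_of_forall_sdiff_eq_zero measurableSet_Ici Ioi_subset_Ici_self]
  rintro w ⟨hw, hw'⟩
  obtain rfl : w = 0 := le_antisymm (not_lt.1 hw') hw
  rw [hs0]
  exact min_eq_right (hs0 ▸ hmono hy)

lemma cY_neg_of_pos (hmono : Monotone s) (hs0 : s 0 = 0) {y : ℝ} (hy : 0 < y) :
    cY s ν (-y) = minIntegral (fun y => -s (-y)) (ν.map Neg.neg) (-s (-y)) := by
  have hnonpos : ∀ w, w ≤ 0 → |s w| = -s w := fun w hw => abs_of_nonpos (hs0 ▸ hmono hw)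
  rw [cY, if_neg (by linarith), minIntegral, measurableEmbedding_neg.setIntegral_map]
  simp only [neg_preimage, neg_Ioi, neg_zero, neg_neg]
  refine setIntegral_congr_fun measurableSet_Iio fun w hw => ?_
  rw [hnonpos _ (by linarith), hnonpos w (le_of_lt hw)]

lemma zetaMinus_eq_attainedSupIoi {f : ℝ → ℝ} (h : EqOn (slopeYMinus s ν z) f (Ioi 0)) :
    zetaMinus s ν z = attainedSupIoi f := by
  by_cases hf : ∃ ρ, 0 < ρ ∧ IsMaxOn f (Ioi 0) ρ
  · obtain ⟨ρ, hρ, hmax⟩ := hf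
    have hmax' : ∀ x, 0 < x → slopeYMinus s ν z x ≤ slopeYMinus s ν z ρ := fun x hx => by
      rw [h hx, h hρ]
      exact isMaxOn_iff.1 hmax x hx
    rw [attainedSupIoi_eq hρ hmax, ← h hρ, zetaMinus, if_pos ⟨ρ, hρ, hmax'⟩]
    exact IsGreatest.csSup_eq ⟨mem_image_of_mem _ (mem_Ioi.2 hρ), forall_mem_image.2 hmax'⟩
  · rw [attainedSupIoi, if_neg hf, zetaMinus, if_neg]
    rintro ⟨ρ, hρ, hmax⟩
    exact hf ⟨ρ, hρ, isMaxOn_iff.2 fun x hx => by rw [← h hx, ← h hρ]; exact hmax x hx⟩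

lemma zetaPlus_eq_attainedSupIoi {f : ℝ → ℝ} (h : EqOn (fun y => -slopeYPlus s ν z y) f (Ioi 0)) :
    zetaPlus s ν z = attainedSupIoi f := by
  by_cases hf : ∃ ρ, 0 < ρ ∧ IsMaxOn f (Ioi 0) ρ
  · obtain ⟨ρ, hρ, hmax⟩ := hf
    have hmin : ∀ x, 0 < x → slopeYPlus s ν z ρ ≤ slopeYPlus s ν z x := fun x hx => by
      have := isMaxOn_iff.1 hmax x hx
      rw [← h hx, ← h hρ] at this
      exact neg_le_neg_iff.1 this
    rw [attainedSupIoi_eq hρ hmax, ← h hρ, zetaPlus, if_pos ⟨ρ, hρ, hmin⟩,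
      IsLeast.csInf_eq ⟨mem_image_of_mem _ (mem_Ioi.2 hρ), forall_mem_image.2 hmin⟩]
  · rw [attainedSupIoi, if_neg hf, zetaPlus, if_neg]
    rintro ⟨ρ, hρ, hmin⟩
    exact hf ⟨ρ, hρ, isMaxOn_iff.2 fun x hx => by
      rw [← h hx, ← h hρ]; exact neg_le_neg (hmin x hx)⟩

lemma zetaMinus_bounds [IsFiniteMeasure ν] (hs : Continuous s) (hmono : StrictMono s)
    (hs0 : s 0 = 0) (hz : 0 < z) :
    max ((cY s ν z - cY s ν (-z)) / (s z + |s (-z)|)) 0 ≤ zetaMinus s ν z ∧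
      zetaMinus s ν z ≤ ν.real (Ioi z) + |cY s ν z - cY s ν (-z)| / |s (-z)| := by
  have hsz : s (-z) < 0 := hs0 ▸ hmono (neg_neg_of_pos hz)
  have hT : 0 < |s (-z)| := abs_pos.2 hsz.ne
  have hcz := cY_of_nonneg_s13 (ν := ν) hmono.monotone hs0 hz.le
  have hslope : EqOn (slopeYMinus s ν z) (minIntegralSlope s ν (cY s ν (-z)) |s (-z)|) (Ioi 0) :=
    fun y hy => by
      rw [slopeYMinus, minIntegralSlope, cY_of_nonneg_s13 hmono.monotone hs0 (le_of_lt hy),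
        abs_of_neg hsz, ← sub_eq_add_neg]
  rw [zetaMinus_eq_attainedSupIoi hslope]
  constructor
  · have := le_attainedSupIoi_minIntegralSlope (μ := ν) hs hmono hs0 hT
      (cY_nonneg (ν := ν) hmono.monotone hs0 (-z)) hz
    rwa [minIntegralSlope, ← hcz] at this
  · have := attainedSupIoi_minIntegralSlope_le (μ := ν) (c := cY s ν (-z)) hmono.monotone hs0 hT
      hz.le
    rwa [← hcz] at this

/-- `ζ₊` is `ζ₋` for the reflected data `y ↦ -s(-y)`, `ν ∘ neg`. -/
lemma zetaPlus_bounds [IsFiniteMeasure ν] (hs : Continuous s) (hmono : StrictMono s)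
    (hs0 : s 0 = 0) (hz : 0 < z) :
    max ((cY s ν (-z) - cY s ν z) / (|s (-z)| + s z)) 0 ≤ zetaPlus s ν z ∧
      zetaPlus s ν z ≤ ν.real (Iio (-z)) + |cY s ν (-z) - cY s ν z| / s z := by
  have hsz : s (-z) < 0 := hs0 ▸ hmono (neg_neg_of_pos hz)
  have hT : 0 < s z := hs0 ▸ hmono hz
  have hRc : Continuous fun y => -s (-y) := (hs.comp continuous_neg).neg
  have hR : StrictMono fun y => -s (-y) := fun _ _ h => neg_lt_neg (hmono (neg_lt_neg h))
  have hR0 : -s (-0) = 0 := by rw [neg_zero, hs0, neg_zero]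
  have hcz := cY_neg_of_pos (ν := ν) hmono.monotone hs0 hz
  have hslope : EqOn (fun y => -slopeYPlus s ν z y)
      (minIntegralSlope (fun y => -s (-y)) (ν.map Neg.neg) (cY s ν z) (s z)) (Ioi 0) :=
    fun y hy => by
      simp only [slopeYPlus, minIntegralSlope]
      rw [← cY_neg_of_pos hmono.monotone hs0 hy, ← neg_div, neg_sub, sub_eq_neg_add (s z)]
  have hmap : (ν.map Neg.neg).real (Ioi z) = ν.real (Iio (-z)) := by
    rw [measureReal_def, Measure.map_apply measurable_neg measurableSet_Ioi, neg_preimage,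
      neg_Ioi, measureReal_def]
  rw [zetaPlus_eq_attainedSupIoi hslope, abs_of_neg hsz]
  constructor
  · have := le_attainedSupIoi_minIntegralSlope (μ := ν.map Neg.neg) hRc hR hR0 hT
      (cY_nonneg (ν := ν) hmono.monotone hs0 z) hz
    simp only [minIntegralSlope] at this
    rwa [← hcz] at this
  · have := attainedSupIoi_minIntegralSlope_le (μ := ν.map Neg.neg) (c := cY s ν z) hR.monotone
      hR0 hT hz.le
    rwa [← hcz, hmap] at this

lemma measureReal_setOf_le_abs (ν : Measure ℝ) [IsFiniteMeasure ν] (hz : 0 < z) :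
    ν.real {y | z ≤ |y|} = ν.real (Iic (-z)) + ν.real (Ici z) := by
  have hset : {y | z ≤ |y|} = Iic (-z) ∪ Ici z := by
    ext y
    exact (le_abs' : z ≤ |y| ↔ _)
  rw [hset, measureReal_union (Iic_disjoint_Ici.2 (by linarith)) measurableSet_Ici]

end ZetaBounds

theorem nuPlus_add_nuMinus_two_sided_bound_general
    (s : ℝ → ℝ) (hs : Continuous s) (hmono : StrictMono s) (hs0 : s 0 = 0)
    (ν : Measure ℝ) [IsProbabilityMeasure ν] :
    ∀ z : ℝ, 0 < z →
      (1 / s z + 1 / |s (-z)|) * |cY s ν z - cY s ν (-z)|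
          + 2 * (ν {y : ℝ | z ≤ |y|}).toReal
        ≥ nuPlus s ν z + nuMinus s ν z ∧
      nuPlus s ν z + nuMinus s ν z
        ≥ |cY s ν z - cY s ν (-z)| / (s z + |s (-z)|) + (ν {y : ℝ | z ≤ |y|}).toReal := by
  intro z hz
  obtain ⟨hminus_ge, hminus_le⟩ := zetaMinus_bounds (ν := ν) hs hmono hs0 hz
  obtain ⟨hplus_ge, hplus_le⟩ := zetaPlus_bounds (ν := ν) hs hmono hs0 hz
  have hD : 0 < s z + |s (-z)| :=
    add_pos (hs0 ▸ hmono hz) (abs_pos.2 (hs0 ▸ hmono (neg_neg_of_pos hz)).ne)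
  set Δ := cY s ν z - cY s ν (-z)
  have hsym : cY s ν (-z) - cY s ν z = -Δ := (neg_sub _ _).symm
  rw [hsym, add_comm |s (-z)|, neg_div] at hplus_ge
  rw [hsym, abs_neg] at hplus_le
  have habs : |Δ| / (s z + |s (-z)|) =
      max (Δ / (s z + |s (-z)|)) 0 + max (-(Δ / (s z + |s (-z)|))) 0 := by
    rw [max_zero_add_max_neg_zero_eq_abs_self, abs_div, abs_of_pos hD]
  have hIoi : ν.real (Ioi z) ≤ ν.real (Ici z) := measureReal_mono Ioi_subset_Ici_self
  have hIio : ν.real (Iio (-z)) ≤ ν.real (Iic (-z)) := measureReal_mono Iio_subset_Iic_self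
  simp only [nuPlus, nuMinus, ← measureReal_def, measureReal_setOf_le_abs ν hz]
  constructor
  · rw [ge_iff_le, add_mul, one_div_mul_eq_div, one_div_mul_eq_div]
    linarith
  · linarith

/-- Corollary 1 of the paper: the two-sided bound on `ν₊ + ν₋`. -/
theorem nuPlus_add_nuMinus_two_sided_bound
    (s : ℝ → ℝ) (hs : Continuous s) (hmono : StrictMono s) (hs0 : s 0 = 0)
    (ν : Measure ℝ) [IsProbabilityMeasure ν] (hν0 : ν {0} = 0) :
    ∀ z : ℝ, 0 < z →
      (1 / s z + 1 / |s (-z)|) * |cY s ν z - cY s ν (-z)|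
          + 2 * (ν {y : ℝ | z ≤ |y|}).toReal
        ≥ nuPlus s ν z + nuMinus s ν z ∧
      nuPlus s ν z + nuMinus s ν z
        ≥ |cY s ν z - cY s ν (-z)| / (s z + |s (-z)|) + (ν {y : ℝ | z ≤ |y|}).toReal :=
  nuPlus_add_nuMinus_two_sided_bound_general s hs hmono hs0 ν
end
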